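/- arXiv:1111.3475 — 5 statements merged into one kernel-verified Lean document; each statement's English description precedes it below -/
import Mathlib

section
/- Let p and q be coprime positive integers with q ≥ 2, set α = p/q, and let κ ∈ ℝ. Let S be the q × q cyclic shift matrix over ℂ (S sends the j-th standard basis vector to the (j+1 mod q)-th), let G be any invertible q × q complex matrix commuting with S (i.e., a circulant matrix), and for t ∈ ℝ let D(t) be the diagonal q × q matrix with diagonal entries D(t)_{jj} = exp(−2iκ·cos(2π(t − jα))) for j = 0, …, q−1. Define M(t) = D(t)·G⁻¹·D(t)·G. Then the characteristic polynomial of M(t) has period 1/q in t: for every t ∈ ℝ and every z ∈ ℂ, det(z·I_q − M(t + 1/q)) = det(z·I_q − M(t)). -/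
/-!
Shifting `t` by `1/q` permutes the diagonal entries of `D t` cyclically: since `p` is invertible
modulo `q`, there is `a` with `a p ≡ -1 (mod q)`, and then the `j`-th entry of `D (t + 1/q)` is
the `(j + a)`-th entry of `D t`. The permutation matrix of `j ↦ j + a` is `S ^ a`, so it commutes
with `G` and `G⁻¹` and therefore conjugates `M (t + 1/q)` into `M t`; similar matrices have the
same characteristic polynomial.
-/

open Matrix Equiv Function

namespace Matrix

section CommRing

variable {n R : Type*} [Fintype n] [DecidableEq n] [CommRing R]

theorem det_smul_one_sub_eq_of_semiconjBy {P A B : Matrix n n R} (hP : IsUnit P)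
    (h : SemiconjBy P A B) (z : R) : (z • 1 - A).det = (z • 1 - B).det := by
  have hsub : SemiconjBy P (z • 1 - A) (z • 1 - B) :=
    SemiconjBy.sub_right ((Commute.one_right P).smul_right z) h
  have hdet := congrArg det hsub.eq
  rw [det_mul, det_mul, mul_comm (z • 1 - B).det] at hdet
  exact ((isUnit_iff_isUnit_det P).1 hP).mul_left_cancel hdet

theorem commute_nonsing_inv_left {A B : Matrix n n R} (h : Commute A B) : Commute A⁻¹ B := by
  by_cases hA : IsUnit A
  · obtain ⟨u, rfl⟩ := hA
    rw [← coe_units_inv]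
    exact h.units_inv_left
  · rw [nonsing_inv_apply_not_isUnit A ((isUnit_iff_isUnit_det A).not.1 hA)]
    exact Commute.zero_left B

end CommRing

section Semiring

variable {R : Type*} [NonAssocSemiring R]

theorem permMatrixHom_mul_diagonal_comp {n : Type*} [Fintype n] [DecidableEq n] (σ : Perm n)
    (d : n → R) :
    permMatrixHom (R := R) σ * diagonal (d ∘ σ) = diagonal d * permMatrixHom (R := R) σ := by
  ext i j
  rw [mul_diagonal, diagonal_mul]
  by_cases h : i = σ j <;> simp [PEquiv.toMatrix_apply, symm_apply_eq, h]

theorem of_ite_succ_mod_eq_permMatrixHom (q : ℕ) [NeZero q] :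
    (of fun i j : Fin q => if (i : ℕ) = ((j : ℕ) + 1) % q then (1 : R) else 0) =
      permMatrixHom (R := R) (Equiv.addRight 1) := by
  ext i j
  simp only [of_apply, permMatrixHom_apply, PEquiv.toMatrix_apply, toPEquiv_apply,
    Option.mem_def, Option.some.injEq, Perm.inv_def, symm_apply_eq, coe_addRight, Fin.ext_iff,
    Fin.val_add, Fin.val_one', Nat.add_mod_mod]

end Semiring

end Matrix

open Fin.NatCast in
theorem Fin.addRight_one_pow_val {q : ℕ} [NeZero q] (a : Fin q) :
    Equiv.addRight (1 : Fin q) ^ (a : ℕ) = Equiv.addRight a := by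
  rw [nsmul_addRight, nsmul_one, Fin.cast_val_eq_self]

theorem Function.Periodic.apply_add_one_div_sub_eq {α : Type*} {f : ℝ → α} (hf : Periodic f 1)
    {p q : ℕ} (hq : q ≠ 0) {a b : ℕ} (hab : ((b : ZMod q) - a) * p = -1) (t : ℝ) :
    f (t + 1 / q - a * (p / q)) = f (t - b * (p / q)) := by
  obtain ⟨k, hk⟩ : (q : ℤ) ∣ 1 + ((b : ℤ) - a) * p :=
    (ZMod.intCast_zmod_eq_zero_iff_dvd _ q).1 (by push_cast; linear_combination hab)
  have hkR : 1 + ((b : ℝ) - a) * p = q * k := by exact_mod_cast hk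
  have harg : t + 1 / q - a * (p / q) = t - b * (p / q) + k * 1 := by
    field_simp
    linear_combination hkR
  rw [harg, hf.int_mul k]

theorem Function.Periodic.semiconjBy_permMatrixHom_diagonal {R : Type*} [NonAssocSemiring R]
    {f : ℝ → R} (hf : Periodic f 1) {p q : ℕ} [NeZero q] {a : Fin q}
    (ha : ((a : ℕ) : ZMod q) * p = -1) (t : ℝ) :
    SemiconjBy (permMatrixHom (R := R) (Equiv.addRight a))
      (diagonal fun j : Fin q => f (t + 1 / q - j * (p / q)))
      (diagonal fun j : Fin q => f (t - j * (p / q))) := by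
  have hshift : (fun j : Fin q => f (t + 1 / q - j * (p / q))) =
      (fun j : Fin q => f (t - j * (p / q))) ∘ Equiv.addRight a := by
    funext j
    refine hf.apply_add_one_div_sub_eq (NeZero.ne q) ?_ t
    simp [Fin.val_add, ha]
  rw [hshift]
  exact permMatrixHom_mul_diagonal_comp _ _

theorem stmt_0_general (p q : ℕ) (hpq : Nat.Coprime p q) (κ : ℝ)
    (S : Matrix (Fin q) (Fin q) ℂ)
    (hS : S = Matrix.of fun i j : Fin q => if (i : ℕ) = ((j : ℕ) + 1) % q then 1 else 0)
    (G : Matrix (Fin q) (Fin q) ℂ) (hGS : G * S = S * G)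
    (D : ℝ → Matrix (Fin q) (Fin q) ℂ)
    (hD : ∀ t : ℝ, D t = Matrix.diagonal fun j : Fin q =>
      Complex.exp (-(Complex.I * (2 * κ)) *
        (Real.cos (2 * Real.pi * (t - (j : ℝ) * ((p : ℝ) / (q : ℝ)))) : ℝ)))
    (M : ℝ → Matrix (Fin q) (Fin q) ℂ)
    (hM : ∀ t : ℝ, M t = D t * G⁻¹ * D t * G) :
    ∀ (t : ℝ) (z : ℂ),
      (z • (1 : Matrix (Fin q) (Fin q) ℂ) - M (t + 1 / (q : ℝ))).det
        = (z • (1 : Matrix (Fin q) (Fin q) ℂ) - M t).det := by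
  intro t z
  obtain rfl | hq := eq_or_ne q 0
  · simp -- `1 / (0 : ℝ) = 0`
  have : NeZero q := ⟨hq⟩
  obtain ⟨a, ha⟩ : ∃ a : Fin q, ((a : ℕ) : ZMod q) * p = -1 :=
    ⟨⟨(-(p : ZMod q)⁻¹).val, ZMod.val_lt _⟩, by
      rw [ZMod.natCast_zmod_val, neg_mul, mul_comm, ZMod.coe_mul_inv_eq_one p hpq]⟩
  set P := permMatrixHom (R := ℂ) (Equiv.addRight a) with hP
  have hPG : Commute P G := by
    rw [hP, ← Fin.addRight_one_pow_val, map_pow, ← of_ite_succ_mod_eq_permMatrixHom, ← hS]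
    exact Commute.pow_left (Commute.symm hGS) _
  have hf : Periodic (fun θ : ℝ =>
      Complex.exp (-(Complex.I * (2 * κ)) * (Real.cos (2 * Real.pi * θ) : ℝ))) 1 := by
    have hcos := Real.cos_periodic.const_mul (2 * Real.pi)
    rw [inv_mul_cancel₀ Real.two_pi_pos.ne'] at hcos
    exact hcos.comp fun c : ℝ => Complex.exp (-(Complex.I * (2 * κ)) * (c : ℂ))
  have hPD : SemiconjBy P (D (t + 1 / q)) (D t) := by
    rw [hD, hD]
    exact hf.semiconjBy_permMatrixHom_diagonal ha t
  have hPM : SemiconjBy P (M (t + 1 / q)) (M t) := by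
    rw [hM, hM]
    exact ((hPD.mul_right (commute_nonsing_inv_left hPG.symm).symm).mul_right hPD).mul_right hPG
  exact det_smul_one_sub_eq_of_semiconjBy ((Group.isUnit _).map _) hPM z

/-- For coprime positive integers `p, q` with `q ≥ 2`, `α = p/q`, `κ ∈ ℝ`,
`S` the `q × q` cyclic shift, `G` an invertible circulant (i.e. commuting with `S`) matrix,
`D t` the diagonal matrix with entries `exp(-2iκ cos(2π(t - jα)))`, and
`M t = D t * G⁻¹ * D t * G`, the characteristic polynomial of `M t` has period `1/q` in `t`. -/
theorem stmt_0 (p q : ℕ) (hp : 0 < p) (hq : 2 ≤ q) (hpq : Nat.Coprime p q) (κ : ℝ)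
    (S : Matrix (Fin q) (Fin q) ℂ)
    (hS : S = Matrix.of fun i j : Fin q => if (i : ℕ) = ((j : ℕ) + 1) % q then 1 else 0)
    (G : Matrix (Fin q) (Fin q) ℂ) (hG : IsUnit G) (hGS : G * S = S * G)
    (D : ℝ → Matrix (Fin q) (Fin q) ℂ)
    (hD : ∀ t : ℝ, D t = Matrix.diagonal fun j : Fin q =>
      Complex.exp (-(Complex.I * (2 * κ)) *
        (Real.cos (2 * Real.pi * (t - (j : ℝ) * ((p : ℝ) / (q : ℝ)))) : ℝ)))
    (M : ℝ → Matrix (Fin q) (Fin q) ℂ)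
    (hM : ∀ t : ℝ, M t = D t * G⁻¹ * D t * G) :
    ∀ (t : ℝ) (z : ℂ),
      (z • (1 : Matrix (Fin q) (Fin q) ℂ) - M (t + 1 / (q : ℝ))).det
        = (z • (1 : Matrix (Fin q) (Fin q) ℂ) - M t).det :=
  stmt_0_general p q hpq κ S hS G hGS D hD M hM
end

section
/- Let n ≥ 2 and let Q(t,z) = zⁿ + q_{n−1}(t)z^{n−1} + ⋯ + q_0(t) where each coefficient q_j is a real-analytic complex-valued function on some open neighborhood of 0 in ℝ. Then the following are equivalent: (a) there exist δ > 0, a monic polynomial B(t,z) in z of degree ≥ 1 and a monic polynomial C(t,z) in z, both with coefficients real-analytic on (−δ, δ), such that Q(t,z) = B(t,z)²·C(t,z) for all |t| < δ and all z ∈ ℂ; (b) the discriminant D(Q(t,·)) = −Res(Q(t,·), ∂Q/∂z(t,·)) vanishes for all t in some neighborhood of 0. -/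
noncomputable def sylvesterMatrix (P Q : Polynomial ℂ) (m n : ℕ) :
    Matrix (Fin (m + n)) (Fin (m + n)) ℂ :=
  Matrix.of fun i j =>
    if (i : ℕ) < n then
      (if (i : ℕ) ≤ (j : ℕ) ∧ (j : ℕ) ≤ (i : ℕ) + m then P.coeff (m + (i : ℕ) - (j : ℕ)) else 0)
    else
      (if (i : ℕ) - n ≤ (j : ℕ) ∧ (j : ℕ) ≤ ((i : ℕ) - n) + n then
        Q.coeff (n + ((i : ℕ) - n) - (j : ℕ)) else 0)

noncomputable def discrim' (P : Polynomial ℂ) (m : ℕ) : ℂ :=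
  -(sylvesterMatrix P (Polynomial.derivative P) m (m - 1)).det

/-!
If `Q = B² C` with `deg B ≥ 1`, then `Q(t, ·)` is not squarefree, hence not coprime to its
derivative, so the resultant vanishes. Conversely, if the discriminant vanishes near `0`, then the
resultant of `Q` and `∂Q/∂z`, computed over the ring `K₀` of analytic germs, is `0`, so `Q` is not
squarefree over the fraction field of `K₀`. Since `K₀` is a valuation ring (every nonzero germ is a
unit times a power of `t`), it is integrally closed, so by Gauss's lemma the monic factors `B` and
`C` of `Q = B² C` can be taken with coefficients in `K₀`; representatives of these germs give the
factorization on a small interval.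
-/

open Polynomial Filter Topology Matrix

def sylvesterRowEquiv (m n : ℕ) : Fin (m + n) ≃ Fin (n + m) where
  toFun i := ⟨if (i : ℕ) < n then n - 1 - i else 2 * n + m - 1 - i, by split <;> omega⟩
  invFun i := ⟨if (i : ℕ) < n then n - 1 - i else 2 * n + m - 1 - i, by split <;> omega⟩
  left_inv i := by ext; dsimp only; split_ifs <;> omega
  right_inv i := by ext; dsimp only; split_ifs <;> omega

/-- `sylvesterMatrix` lists the coefficients by decreasing degree along rows, those of `P` first;
Mathlib's `sylvester` lists them by increasing degree along columns, those of `Q` first. -/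
theorem sylvesterMatrix_eq_submatrix (P Q : ℂ[X]) (m n : ℕ) :
    sylvesterMatrix P Q m n = (sylvester Q P n m)ᵀ.submatrix (sylvesterRowEquiv m n)
      (Fin.revPerm.trans (finCongr (add_comm m n))) := by
  ext i j
  simp only [sylvesterMatrix, sylvester, sylvesterRowEquiv, of_apply, submatrix_apply,
    transpose_apply, Fin.addCases, Equiv.coe_fn_mk, Equiv.trans_apply, Fin.revPerm_apply,
    Fin.val_rev, finCongr_apply, Fin.val_cast, Set.mem_Icc, eq_rec_constant, Fin.val_castLT,
    Fin.val_subNat]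
  split_ifs <;> first | rfl | (exfalso; omega) | (congr 1; omega)

theorem det_sylvesterMatrix_eq_zero_iff (P Q : ℂ[X]) (m n : ℕ) :
    (sylvesterMatrix P Q m n).det = 0 ↔ resultant Q P n m = 0 := by
  have h := det_reindex (sylvesterRowEquiv m n).symm
    (Fin.revPerm.trans (finCongr (add_comm m n))).symm (sylvester Q P n m)ᵀ
  rw [reindex_apply, Equiv.symm_symm, Equiv.symm_symm, ← sylvesterMatrix_eq_submatrix] at h
  simp [h, resultant]

theorem discrim'_eq_zero_iff (P : ℂ[X]) (m : ℕ) :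
    discrim' P m = 0 ↔ resultant (derivative P) P (m - 1) m = 0 := by
  rw [discrim', neg_eq_zero, det_sylvesterMatrix_eq_zero_iff]

theorem resultant_derivative_eq_zero_iff {K : Type*} [Field K] [CharZero K] {P : K[X]}
    (hP : P ≠ 0) :
    resultant (derivative P) P (P.natDegree - 1) P.natDegree = 0 ↔ ¬ P.Separable := by
  rw [← natDegree_derivative, resultant_eq_zero_iff]
  simp [hP, Separable, isCoprime_comm]

theorem discrim'_eq_zero_of_eq_sq_mul {P B C : ℂ[X]} (hP : P ≠ 0) (hB : 0 < B.natDegree)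
    (h : P = B ^ 2 * C) : discrim' P P.natDegree = 0 := by
  refine (discrim'_eq_zero_iff P _).mpr ((resultant_derivative_eq_zero_iff hP).mpr fun hsep => ?_)
  exact not_isUnit_of_natDegree_pos B hB (hsep.squarefree B ⟨C, by rw [h, sq]⟩)

theorem resultant_derivative_map {R S : Type*} [CommRing R] [CommRing S] (φ : R →+* S) (P : R[X])
    (m n : ℕ) :
    resultant (derivative (P.map φ)) (P.map φ) m n = φ (resultant (derivative P) P m n) := by
  rw [derivative_map, resultant_map_map]

section MonicOfCoeffs

variable {R S : Type*} [CommRing R] [CommRing S]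

noncomputable def monicOfCoeffs (n : ℕ) (a : Fin n → R) : R[X] :=
  X ^ n + ∑ j : Fin n, C (a j) * X ^ (j : ℕ)

theorem monic_monicOfCoeffs [Nontrivial R] (n : ℕ) (a : Fin n → R) :
    (monicOfCoeffs n a).Monic :=
  monic_X_pow_add (degree_sum_fin_lt a)

theorem natDegree_monicOfCoeffs [Nontrivial R] (n : ℕ) (a : Fin n → R) :
    (monicOfCoeffs n a).natDegree = n := by
  rw [monicOfCoeffs, natDegree_add_eq_left_of_degree_lt, natDegree_X_pow]
  simpa using degree_sum_fin_lt a

theorem map_monicOfCoeffs (f : R →+* S) (n : ℕ) (a : Fin n → R) :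
    (monicOfCoeffs n a).map f = monicOfCoeffs n (f ∘ a) := by
  simp [monicOfCoeffs, Polynomial.map_sum]

theorem eval_monicOfCoeffs (n : ℕ) (a : Fin n → R) (z : R) :
    (monicOfCoeffs n a).eval z = z ^ n + ∑ j : Fin n, a j * z ^ (j : ℕ) := by
  simp [monicOfCoeffs, eval_finsetSum]

theorem Polynomial.Monic.eq_monicOfCoeffs {p : R[X]} (hp : p.Monic) :
    p = monicOfCoeffs p.natDegree (fun j => p.coeff j) := by
  rw [monicOfCoeffs, Fin.sum_univ_eq_sum_range (fun j => C (p.coeff j) * X ^ j)]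
  exact hp.as_sum

end MonicOfCoeffs

theorem Filter.Germ.eventually_map_evalRingHom_eq {α R : Type*} [CommRing R] {l : Filter α}
    {P Q : (α → R)[X]} (h : P.map (Germ.coeRingHom l) = Q.map (Germ.coeRingHom l)) :
    ∀ᶠ t in l, P.map (Pi.evalRingHom (fun _ => R) t) = Q.map (Pi.evalRingHom (fun _ => R) t) := by
  have hcoeff : ∀ k, P.coeff k =ᶠ[l] Q.coeff k := fun k => by
    simpa using congrArg (coeff · k) h
  filter_upwards [(eventually_all_finset (P.support ∪ Q.support)).mpr fun k _ => hcoeff k]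
    with t ht
  ext k
  by_cases hk : k ∈ P.support ∪ Q.support
  · simpa using ht k hk
  · simp only [Finset.mem_union, mem_support_iff, not_or, not_not] at hk
    simp [hk.1, hk.2]

theorem Polynomial.Monic.exists_eq_sq_mul_of_not_squarefree {K : Type*} [Field K] {F : K[X]}
    (hF : F.Monic) (h : ¬ Squarefree F) :
    ∃ p c : K[X], p.Monic ∧ c.Monic ∧ 0 < p.natDegree ∧ F = p ^ 2 * c := by
  classical
  obtain ⟨x, hx, hxF⟩ : ∃ x, Irreducible x ∧ x * x ∣ F := by
    simpa [squarefree_iff_irreducible_sq_not_dvd_of_ne_zero hF.ne_zero] using h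
  have hp : (normalize x).Monic := monic_normalize hx.ne_zero
  obtain ⟨c, hc⟩ : normalize x ^ 2 ∣ F := by
    rwa [sq, ((normalize_associated x).mul_mul (normalize_associated x)).dvd_iff_dvd_left]
  refine ⟨normalize x, c, hp, (hp.pow 2).of_mul_monic_left (hc ▸ hF), ?_, hc⟩
  exact ((normalize_associated x).symm.irreducible hx).natDegree_pos

section GaussLemma

variable {R K : Type*} [CommRing R] [IsIntegrallyClosed R] [Field K] [Algebra R K]
  [IsFractionRing R K]

theorem IsIntegrallyClosed.exists_monic_map_eq_of_dvd {f : R[X]} (hf : f.Monic) {g : K[X]}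
    (hg : g.Monic) (hgf : g ∣ f.map (algebraMap R K)) :
    ∃ g' : R[X], g'.Monic ∧ g'.map (algebraMap R K) = g := by
  obtain ⟨g', hg'⟩ := IsIntegrallyClosed.eq_map_mul_C_of_dvd K hf hgf
  rw [hg.leadingCoeff, C_1, mul_one] at hg'
  exact ⟨g', monic_of_injective (IsFractionRing.injective R K) (hg' ▸ hg), hg'⟩

theorem Polynomial.Monic.exists_eq_sq_mul_of_not_separable_map [PerfectField K] {f : R[X]}
    (hf : f.Monic) (hsep : ¬ (f.map (algebraMap R K)).Separable) :
    ∃ B C : R[X], B.Monic ∧ C.Monic ∧ 0 < B.natDegree ∧ f = B ^ 2 * C := by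
  have hinj := IsFractionRing.injective R K
  obtain ⟨p, c, hp, hc, hpdeg, hfpc⟩ :=
    (hf.map (algebraMap R K)).exists_eq_sq_mul_of_not_squarefree
      (mt PerfectField.separable_iff_squarefree.mpr hsep)
  obtain ⟨B, hB, rfl⟩ := IsIntegrallyClosed.exists_monic_map_eq_of_dvd hf hp
    (Dvd.intro (p * c) (by rw [hfpc]; ring))
  obtain ⟨C, hC, rfl⟩ := IsIntegrallyClosed.exists_monic_map_eq_of_dvd hf hc
    (Dvd.intro_left _ hfpc.symm)
  refine ⟨B, C, hB, hC, by rwa [natDegree_map_eq_of_injective hinj] at hpdeg, ?_⟩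
  exact map_injective _ hinj (by simp [hfpc])

end GaussLemma

section AnalyticGerms

variable (𝕜 𝕜' : Type*) [NontriviallyNormedField 𝕜] [NormedField 𝕜'] [NormedAlgebra 𝕜 𝕜']
  (x₀ : 𝕜)

def analyticGerms : Subring (Germ (𝓝 x₀) 𝕜') where
  carrier := {φ | ∃ f : 𝕜 → 𝕜', AnalyticAt 𝕜 f x₀ ∧ φ = f}
  mul_mem' := by
    rintro _ _ ⟨f, hf, rfl⟩ ⟨g, hg, rfl⟩
    exact ⟨f * g, hf.mul hg, rfl⟩
  one_mem' := ⟨1, analyticAt_const, rfl⟩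
  add_mem' := by
    rintro _ _ ⟨f, hf, rfl⟩ ⟨g, hg, rfl⟩
    exact ⟨f + g, hf.add hg, rfl⟩
  zero_mem' := ⟨0, analyticAt_const, rfl⟩
  neg_mem' := by
    rintro _ ⟨f, hf, rfl⟩
    exact ⟨-f, hf.neg, rfl⟩

variable {𝕜 𝕜' x₀}

def AnalyticAt.germ {f : 𝕜 → 𝕜'} (hf : AnalyticAt 𝕜 f x₀) : analyticGerms 𝕜 𝕜' x₀ :=
  ⟨f, f, hf, rfl⟩

namespace analyticGerms

theorem exists_analyticAt (φ : analyticGerms 𝕜 𝕜' x₀) :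
    ∃ f : 𝕜 → 𝕜', ∃ hf : AnalyticAt 𝕜 f x₀, hf.germ = φ := by
  obtain ⟨f, hf, h⟩ := φ.2
  exact ⟨f, hf, Subtype.ext h.symm⟩

theorem germ_eq_zero_iff {f : 𝕜 → 𝕜'} (hf : AnalyticAt 𝕜 f x₀) :
    hf.germ = 0 ↔ ∀ᶠ t in 𝓝 x₀, f t = 0 :=
  Subtype.ext_iff.trans Germ.coe_eq

instance : NoZeroDivisors (analyticGerms 𝕜 𝕜' x₀) where
  eq_zero_or_eq_zero_of_mul_eq_zero {φ ψ} h := by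
    obtain ⟨f, hf, rfl⟩ := exists_analyticAt φ
    obtain ⟨g, hg, rfl⟩ := exists_analyticAt ψ
    have hfg : ∀ᶠ t in 𝓝 x₀, f t * g t = 0 := (germ_eq_zero_iff (hf.mul hg)).mp h
    rw [germ_eq_zero_iff, germ_eq_zero_iff]
    -- isolated zeros: otherwise `f * g` would not vanish on a punctured neighbourhood of `x₀`
    refine hf.eventually_eq_zero_or_eventually_ne_zero.imp_right fun hf' => ?_
    refine hg.eventually_eq_zero_or_eventually_ne_zero.resolve_right fun hg' => ?_
    obtain ⟨t, hft, hgt, ht⟩ :=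
      (hf'.and (hg'.and (eventually_nhdsWithin_of_eventually_nhds hfg))).exists
    exact mul_ne_zero hft hgt ht

instance : IsDomain (analyticGerms 𝕜 𝕜' x₀) := NoZeroDivisors.to_isDomain _

theorem isUnit_germ {g : 𝕜 → 𝕜'} (hg : AnalyticAt 𝕜 g x₀) (hg₀ : g x₀ ≠ 0) :
    IsUnit hg.germ := by
  refine IsUnit.of_mul_eq_one (hg.inv hg₀).germ (Subtype.ext (Germ.coe_eq.mpr ?_))
  filter_upwards [hg.continuousAt.eventually_ne hg₀] with t ht
  exact mul_inv_cancel₀ ht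

variable (𝕜 𝕜' x₀) in
def uniformizer : analyticGerms 𝕜 𝕜' x₀ :=
  (show AnalyticAt 𝕜 (fun t => algebraMap 𝕜 𝕜' (t - x₀)) x₀ from
    (algebraMapCLM 𝕜 𝕜').analyticAt _ |>.comp (analyticAt_id.sub analyticAt_const)).germ

theorem exists_associated_uniformizer_pow {φ : analyticGerms 𝕜 𝕜' x₀} (hφ : φ ≠ 0) :
    ∃ k : ℕ, Associated (uniformizer 𝕜 𝕜' x₀ ^ k) φ := by
  obtain ⟨f, hf, rfl⟩ := exists_analyticAt φ
  obtain ⟨k, hk⟩ : ∃ k : ℕ, k = analyticOrderAt f x₀ :=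
    ENat.ne_top_iff_exists.mp fun htop => hφ <| (germ_eq_zero_iff hf).mpr
      (analyticOrderAt_eq_top.mp htop)
  obtain ⟨g, hg, hg₀, hfg⟩ := hf.analyticOrderAt_eq_natCast.mp hk.symm
  refine ⟨k, (isUnit_germ hg hg₀).unit, Subtype.ext (Germ.coe_eq.mpr ?_)⟩
  filter_upwards [hfg] with t ht
  simp [ht, Algebra.smul_def]

instance : ValuationRing (analyticGerms 𝕜 𝕜' x₀) := by
  refine (ValuationRing.iff_dvd_total).mpr ⟨fun φ ψ => ?_⟩
  rcases eq_or_ne φ 0 with rfl | hφ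
  · exact Or.inr (dvd_zero ψ)
  rcases eq_or_ne ψ 0 with rfl | hψ
  · exact Or.inl (dvd_zero φ)
  obtain ⟨j, hj⟩ := exists_associated_uniformizer_pow hφ
  obtain ⟨k, hk⟩ := exists_associated_uniformizer_pow hψ
  rw [← hj.dvd_iff_dvd_left, ← hj.dvd_iff_dvd_right, ← hk.dvd_iff_dvd_left,
    ← hk.dvd_iff_dvd_right]
  exact (le_total j k).imp (pow_dvd_pow _) (pow_dvd_pow _)

instance [CharZero 𝕜'] : CharZero (analyticGerms 𝕜 𝕜' x₀) :=
  ⟨fun a b h => by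
    obtain ⟨_, hab⟩ := (Germ.coe_eq.mp (congrArg Subtype.val h) :
      ∀ᶠ _ in 𝓝 x₀, (a : 𝕜') = b).exists
    exact Nat.cast_injective (R := 𝕜') hab⟩

set_option synthInstance.maxHeartbeats 200000 in
instance : IsIntegrallyClosed (analyticGerms 𝕜 𝕜' x₀) := inferInstance

theorem map_subtype_monicOfCoeffs {n : ℕ} {q : Fin n → 𝕜 → 𝕜'} (hq : ∀ j, AnalyticAt 𝕜 (q j) x₀) :
    (monicOfCoeffs n fun j => (hq j).germ).map (analyticGerms 𝕜 𝕜' x₀).subtype =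
      (monicOfCoeffs n q).map (Germ.coeRingHom (𝓝 x₀)) := by
  simp only [map_monicOfCoeffs]
  rfl

theorem resultant_derivative_monicOfCoeffs_eq_zero {n : ℕ} {q : Fin n → 𝕜 → 𝕜'}
    (hq : ∀ j, AnalyticAt 𝕜 (q j) x₀) {m k : ℕ}
    (h : ∀ᶠ t in 𝓝 x₀,
      resultant (derivative (monicOfCoeffs n (q · t))) (monicOfCoeffs n (q · t)) m k = 0) :
    resultant (derivative (monicOfCoeffs n fun j => (hq j).germ))
      (monicOfCoeffs n fun j => (hq j).germ) m k = 0 := by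
  apply Subtype.val_injective
  rw [← Subring.coe_subtype, ← resultant_derivative_map, map_subtype_monicOfCoeffs,
    resultant_derivative_map, map_zero]
  refine Germ.coe_eq.mpr ?_
  filter_upwards [h] with t ht
  have hev := resultant_derivative_map (Pi.evalRingHom (fun _ => 𝕜') t) (monicOfCoeffs n q) m k
  rw [map_monicOfCoeffs] at hev
  exact hev.symm.trans ht

theorem eventually_eq_sq_mul_of_germ [CompleteSpace 𝕜'] {n : ℕ} {q : Fin n → 𝕜 → 𝕜'}
    (hq : ∀ j, AnalyticAt 𝕜 (q j) x₀)
    {B C : (analyticGerms 𝕜 𝕜' x₀)[X]} (hB : B.Monic) (hC : C.Monic)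
    (h : monicOfCoeffs n (fun j => (hq j).germ) = B ^ 2 * C) :
    ∃ (b : Fin B.natDegree → 𝕜 → 𝕜') (c : Fin C.natDegree → 𝕜 → 𝕜'), ∀ᶠ t in 𝓝 x₀,
      (∀ j, AnalyticAt 𝕜 (b j) t) ∧ (∀ j, AnalyticAt 𝕜 (c j) t) ∧
        monicOfCoeffs n (q · t) =
          monicOfCoeffs _ (b · t) ^ 2 * monicOfCoeffs _ (c · t) := by
  choose b hb hbB using fun j : Fin B.natDegree => exists_analyticAt (B.coeff j)
  choose c hc hcC using fun j : Fin C.natDegree => exists_analyticAt (C.coeff j)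
  have hBC : monicOfCoeffs n (fun j => (hq j).germ) =
      monicOfCoeffs _ (fun j => (hb j).germ) ^ 2 * monicOfCoeffs _ (fun j => (hc j).germ) := by
    simp only [hbB, hcC, ← hB.eq_monicOfCoeffs, ← hC.eq_monicOfCoeffs, h]
  have hgerm : (monicOfCoeffs n q).map (Germ.coeRingHom (𝓝 x₀)) =
      (monicOfCoeffs _ b ^ 2 * monicOfCoeffs _ c).map (Germ.coeRingHom (𝓝 x₀)) := by
    rw [Polynomial.map_mul, Polynomial.map_pow, ← map_subtype_monicOfCoeffs hq,
      ← map_subtype_monicOfCoeffs hb, ← map_subtype_monicOfCoeffs hc, hBC, Polynomial.map_mul,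
      Polynomial.map_pow]
  refine ⟨b, c, ?_⟩
  filter_upwards [eventually_all.mpr fun j => (hb j).eventually_analyticAt,
    eventually_all.mpr fun j => (hc j).eventually_analyticAt,
    Germ.eventually_map_evalRingHom_eq hgerm] with t hbt hct ht
  rw [Polynomial.map_mul, Polynomial.map_pow, map_monicOfCoeffs, map_monicOfCoeffs,
    map_monicOfCoeffs] at ht
  exact ⟨hbt, hct, ht⟩

theorem exists_eventually_eq_sq_mul [CharZero 𝕜'] [CompleteSpace 𝕜'] {n : ℕ}
    {q : Fin n → 𝕜 → 𝕜'} (hq : ∀ j, AnalyticAt 𝕜 (q j) x₀)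
    (h : ∀ᶠ t in 𝓝 x₀,
      resultant (derivative (monicOfCoeffs n (q · t))) (monicOfCoeffs n (q · t)) (n - 1) n = 0) :
    ∃ d e : ℕ, 1 ≤ d ∧ 2 * d + e = n ∧ ∃ (b : Fin d → 𝕜 → 𝕜') (c : Fin e → 𝕜 → 𝕜'),
      ∀ᶠ t in 𝓝 x₀, (∀ j, AnalyticAt 𝕜 (b j) t) ∧ (∀ j, AnalyticAt 𝕜 (c j) t) ∧
        monicOfCoeffs n (q · t) = monicOfCoeffs d (b · t) ^ 2 * monicOfCoeffs e (c · t) := by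
  set Q := monicOfCoeffs n fun j => (hq j).germ
  have hsep : ¬ (Q.map (algebraMap _ (FractionRing (analyticGerms 𝕜 𝕜' x₀)))).Separable := by
    rw [← resultant_derivative_eq_zero_iff ((monic_monicOfCoeffs n _).map _).ne_zero,
      natDegree_map_eq_of_injective (IsFractionRing.injective _ _), natDegree_monicOfCoeffs,
      resultant_derivative_map, resultant_derivative_monicOfCoeffs_eq_zero hq h, map_zero]
  obtain ⟨B, C, hB, hC, hBdeg, hQBC⟩ :=
    (monic_monicOfCoeffs n _).exists_eq_sq_mul_of_not_separable_map hsep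
  have hdeg : 2 * B.natDegree + C.natDegree = n := by
    rw [← natDegree_monicOfCoeffs n (fun j => (hq j).germ), hQBC, (hB.pow 2).natDegree_mul hC,
      hB.natDegree_pow, mul_comm]
  exact ⟨_, _, hBdeg, hdeg, eventually_eq_sq_mul_of_germ hq hB hC hQBC⟩

end analyticGerms

end AnalyticGerms

theorem stmt_2_general (n : ℕ) (q : Fin n → ℝ → ℂ)
    (hq : ∀ j, AnalyticAt ℝ (q j) 0) :
    (∃ δ : ℝ, 0 < δ ∧ ∃ d e : ℕ, 1 ≤ d ∧ 2 * d + e = n ∧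
      ∃ b : Fin d → ℝ → ℂ, ∃ c : Fin e → ℝ → ℂ,
        (∀ j, AnalyticOnNhd ℝ (b j) (Set.Ioo (-δ) δ)) ∧
        (∀ j, AnalyticOnNhd ℝ (c j) (Set.Ioo (-δ) δ)) ∧
        ∀ t ∈ Set.Ioo (-δ) δ, ∀ z : ℂ,
          z ^ n + ∑ j, q j t * z ^ (j : ℕ) =
            (z ^ d + ∑ j, b j t * z ^ (j : ℕ)) ^ 2 * (z ^ e + ∑ j, c j t * z ^ (j : ℕ)))
    ↔
    (∃ ε : ℝ, 0 < ε ∧ ∀ t ∈ Set.Ioo (-ε) ε,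
      discrim' (Polynomial.X ^ n + ∑ j, Polynomial.C (q j t) * Polynomial.X ^ (j : ℕ)) n
        = 0) := by
  constructor
  · rintro ⟨δ, hδ, d, e, hd, -, b, c, -, -, hfac⟩
    refine ⟨δ, hδ, fun t ht => ?_⟩
    have hQ : monicOfCoeffs n (q · t) = monicOfCoeffs d (b · t) ^ 2 * monicOfCoeffs e (c · t) :=
      Polynomial.funext fun z => by simp [eval_monicOfCoeffs, hfac t ht z]
    have h := discrim'_eq_zero_of_eq_sq_mul (monic_monicOfCoeffs n _).ne_zero
      (by rwa [natDegree_monicOfCoeffs]) hQ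
    rwa [natDegree_monicOfCoeffs] at h
  · rintro ⟨ε, hε, hdisc⟩
    obtain ⟨d, e, hd, hde, b, c, hbc⟩ := analyticGerms.exists_eventually_eq_sq_mul hq <|
      eventually_of_mem (Ioo_mem_nhds (by linarith) hε) fun t ht =>
        (discrim'_eq_zero_iff _ n).mp (hdisc t ht)
    obtain ⟨δ, hδ, hball⟩ := Metric.eventually_nhds_iff_ball.mp hbc
    simp only [Real.ball_eq_Ioo, zero_sub, zero_add] at hball
    refine ⟨δ, hδ, d, e, hd, hde, b, c, fun j t ht => (hball t ht).1 j,
      fun j t ht => (hball t ht).2.1 j, fun t ht z => ?_⟩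
    simpa [eval_monicOfCoeffs] using congrArg (eval z) (hball t ht).2.2

/-- For a monic polynomial `Q(t,z) = zⁿ + ∑ q_j(t) z^j` of degree `n ≥ 2` with
coefficients real-analytic near `0 ∈ ℝ`, the following are equivalent:
(a) `Q = B² C` near `0` with `B, C` monic in `z`, `deg B ≥ 1`, coefficients real-analytic
on `(-δ, δ)`; (b) the discriminant `-Res(Q(t,·), ∂Q/∂z(t,·))` vanishes for all `t` near `0`. -/
theorem stmt_2 (n : ℕ) (hn : 2 ≤ n) (q : Fin n → ℝ → ℂ)
    (hq : ∀ j, AnalyticAt ℝ (q j) 0) :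
    (∃ δ : ℝ, 0 < δ ∧ ∃ d e : ℕ, 1 ≤ d ∧ 2 * d + e = n ∧
      ∃ b : Fin d → ℝ → ℂ, ∃ c : Fin e → ℝ → ℂ,
        (∀ j, AnalyticOnNhd ℝ (b j) (Set.Ioo (-δ) δ)) ∧
        (∀ j, AnalyticOnNhd ℝ (c j) (Set.Ioo (-δ) δ)) ∧
        ∀ t ∈ Set.Ioo (-δ) δ, ∀ z : ℂ,
          z ^ n + ∑ j, q j t * z ^ (j : ℕ) =
            (z ^ d + ∑ j, b j t * z ^ (j : ℕ)) ^ 2 * (z ^ e + ∑ j, c j t * z ^ (j : ℕ)))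
    ↔
    (∃ ε : ℝ, 0 < ε ∧ ∀ t ∈ Set.Ioo (-ε) ε,
      discrim' (Polynomial.X ^ n + ∑ j, Polynomial.C (q j t) * Polynomial.X ^ (j : ℕ)) n
        = 0) :=
  stmt_2_general n q hq
end

section
/- Let P(t,z) = z² + p₁(t)z + p₀(t), where p₀ and p₁ are real-valued real-analytic functions on a neighborhood of 0 in ℝ, and assume that for every t near 0 both complex roots of P(t,·) have modulus 1. Then P is completely reducible: there exist δ > 0 and real-analytic functions λ₊, λ₋ : (−δ, δ) → ℂ such that P(t,z) = (z − λ₊(t))(z − λ₋(t)) for all |t| < δ and all z ∈ ℂ. -/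
/-!
Both roots have modulus one, so `p₀ = λ₊ λ₋` only takes the values `±1` and, being continuous,
is constant near `0`. If `p₀ ≡ -1` the discriminant `p₁² + 4` is positive; if `p₀ ≡ 1` a real
root would be `±1`, which forces `p₁² ≤ 4`, so the discriminant is nonpositive. A real-analytic
function of constant sign is `(t - x)^(2k)` times a function of that sign not vanishing at `x`,
so it has an analytic square root (times `i` if it is nonpositive), and the quadratic formula
gives analytic roots.
-/

open Filter Topology Set Complex

theorem exists_real_root_of_four_mul_le_sq {p q : ℝ} (h : 4 * q ≤ p ^ 2) :
    ∃ r : ℝ, r ^ 2 + p * r + q = 0 :=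
  ⟨(-p + √(p ^ 2 - 4 * q)) / 2, by linear_combination (1 / 4) * Real.sq_sqrt (sub_nonneg.2 h)⟩

theorem quadratic_eq_mul_of_sq_eq_discrim {K : Type*} [Field K] [NeZero (2 : K)] {p q s : K}
    (hs : s ^ 2 = p ^ 2 - 4 * q) (z : K) :
    z ^ 2 + p * z + q = (z - (-p + s) / 2) * (z - (-p - s) / 2) := by
  field_simp
  linear_combination hs

theorem eq_one_and_sq_le_four_or_eq_neg_one {p q : ℝ}
    (h : ∀ z : ℂ, z ^ 2 + (p : ℂ) * z + (q : ℂ) = 0 → ‖z‖ = 1) :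
    q = 1 ∧ p ^ 2 ≤ 4 ∨ q = -1 := by
  obtain ⟨s, hs⟩ := IsAlgClosed.exists_pow_nat_eq ((p : ℂ) ^ 2 - 4 * q) two_pos
  have hfac := quadratic_eq_mul_of_sq_eq_discrim hs
  have hq : |q| = 1 := by
    have hprod : (q : ℂ) = (-p + s) / 2 * ((-p - s) / 2) := by linear_combination (1 / 4) * hs
    have := congrArg norm hprod
    rwa [norm_mul, h ((-p + s) / 2) (by rw [hfac]; ring), h ((-p - s) / 2) (by rw [hfac]; ring),
      norm_real, Real.norm_eq_abs, mul_one] at this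
  rcases (abs_eq zero_le_one).mp hq with rfl | rfl
  · refine .inl ⟨rfl, not_lt.mp fun hp => ?_⟩
    -- a real root of modulus 1 is ±1, which forces p = ∓2
    obtain ⟨r, hr⟩ := exists_real_root_of_four_mul_le_sq (by linarith : 4 * (1 : ℝ) ≤ p ^ 2)
    have hr1 : |r| = 1 := by simpa using h r (by exact_mod_cast hr)
    have hr2 : r ^ 2 = 1 := by rw [← sq_abs, hr1, one_pow]
    nlinarith [sq_nonneg (p * r)]
  · exact .inr rfl

theorem ContinuousAt.eventually_eq_of_eventually_eq_one_or_eq_neg_one {X : Type*}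
    [TopologicalSpace X] {f : X → ℝ} {x : X} (hf : ContinuousAt f x)
    (h : ∀ᶠ y in 𝓝 x, f y = 1 ∨ f y = -1) : ∀ᶠ y in 𝓝 x, f y = f x := by
  filter_upwards [h, hf.eventually (Metric.ball_mem_nhds (f x) two_pos)] with y hy hyx
  rw [Real.dist_eq, abs_sub_lt_iff] at hyx
  rcases hy with hy | hy <;> rcases h.self_of_nhds with hx | hx <;> linarith

theorem eventually_discrim_nonneg_or_nonpos {X : Type*} [TopologicalSpace X] {p0 p1 : X → ℝ}
    {x : X} (h0 : ContinuousAt p0 x)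
    (hroots : ∀ᶠ t in 𝓝 x, ∀ z : ℂ, z ^ 2 + (p1 t : ℂ) * z + (p0 t : ℂ) = 0 → ‖z‖ = 1) :
    (∀ᶠ t in 𝓝 x, 0 ≤ p1 t ^ 2 - 4 * p0 t) ∨ (∀ᶠ t in 𝓝 x, p1 t ^ 2 - 4 * p0 t ≤ 0) := by
  have hcases := hroots.mono fun t => eq_one_and_sq_le_four_or_eq_neg_one
  have hconst := h0.eventually_eq_of_eventually_eq_one_or_eq_neg_one
    (hcases.mono fun t => Or.imp_left And.left)
  rcases hcases.self_of_nhds with ⟨hx, -⟩ | hx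
  · refine .inr ?_
    filter_upwards [hcases, hconst] with t ht htx
    rcases ht with ⟨-, hp⟩ | ht <;> linarith
  · refine .inl ?_
    filter_upwards [hconst] with t ht
    rw [ht, hx]
    linarith [sq_nonneg (p1 t)]

theorem AnalyticAt.ofReal {E : Type*} [NormedAddCommGroup E] [NormedSpace ℝ E] {f : E → ℝ}
    {x : E} (hf : AnalyticAt ℝ f x) : AnalyticAt ℝ (fun y => (f y : ℂ)) x :=
  (ofRealCLM.analyticAt _).comp hf

theorem AnalyticAt.exists_sq_eq_of_pos {E : Type*} [NormedAddCommGroup E] [NormedSpace ℝ E]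
    {f : E → ℝ} {x : E} (hf : AnalyticAt ℝ f x) (hx : 0 < f x) :
    ∃ g : E → ℝ, AnalyticAt ℝ g x ∧ ∀ᶠ y in 𝓝 x, g y ^ 2 = f y := by
  refine ⟨fun y => Real.exp (Real.log (f y) / 2),
    ((analyticAt_log hx).comp hf).div_const.rexp', ?_⟩
  filter_upwards [hf.continuousAt.eventually_const_lt hx] with y hy
  rw [← Real.exp_nat_mul, Nat.cast_ofNat, mul_div_cancel₀ _ two_ne_zero, Real.exp_log hy]

theorem pos_and_even_of_eventually_nonneg_pow_mul {u : ℝ → ℝ} {x : ℝ} {n : ℕ}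
    (hu : ContinuousAt u x) (hux : u x ≠ 0) (h : ∀ᶠ t in 𝓝 x, 0 ≤ (t - x) ^ n * u t) :
    0 < u x ∧ Even n := by
  rcases hux.lt_or_gt with hneg | hpos
  · obtain ⟨t, ⟨ht, hut⟩, hxt⟩ := (((h.and (hu.eventually_lt_const hneg)).filter_mono
      nhdsWithin_le_nhds).and (self_mem_nhdsWithin : ∀ᶠ t in 𝓝[>] x, t ∈ Ioi x)).exists
    nlinarith [pow_pos (sub_pos.2 hxt) n]
  · refine ⟨hpos, Nat.not_odd_iff_even.mp fun hodd => ?_⟩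
    obtain ⟨t, ⟨ht, hut⟩, htx⟩ := (((h.and (hu.eventually_const_lt hpos)).filter_mono
      nhdsWithin_le_nhds).and (self_mem_nhdsWithin : ∀ᶠ t in 𝓝[<] x, t ∈ Iio x)).exists
    nlinarith [hodd.pow_neg (sub_neg.2 htx)]

theorem AnalyticAt.exists_sq_eq_of_eventually_nonneg {f : ℝ → ℝ} {x : ℝ} (hf : AnalyticAt ℝ f x)
    (hnn : ∀ᶠ t in 𝓝 x, 0 ≤ f t) :
    ∃ g : ℝ → ℝ, AnalyticAt ℝ g x ∧ ∀ᶠ t in 𝓝 x, g t ^ 2 = f t := by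
  cases hord : analyticOrderAt f x with
  | top =>
    exact ⟨0, analyticAt_const, (analyticOrderAt_eq_top.mp hord).mono fun t ht => by simp [ht]⟩
  | coe n =>
    obtain ⟨u, hu, hux, hfu⟩ := hf.analyticOrderAt_eq_natCast.mp hord
    simp only [smul_eq_mul] at hfu
    obtain ⟨hpos, k, rfl⟩ := pos_and_even_of_eventually_nonneg_pow_mul hu.continuousAt hux
      (by filter_upwards [hnn, hfu] with t ht hft; rwa [← hft])
    obtain ⟨v, hv, hvu⟩ := hu.exists_sq_eq_of_pos hpos
    refine ⟨fun t => (t - x) ^ k * v t, ((analyticAt_id.sub analyticAt_const).pow k).mul hv, ?_⟩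
    filter_upwards [hfu, hvu] with t hft hvt
    rw [hft, mul_pow, hvt]
    ring

theorem AnalyticAt.exists_complex_sq_eq {f : ℝ → ℝ} {x : ℝ} (hf : AnalyticAt ℝ f x)
    (hsign : (∀ᶠ t in 𝓝 x, 0 ≤ f t) ∨ (∀ᶠ t in 𝓝 x, f t ≤ 0)) :
    ∃ s : ℝ → ℂ, AnalyticAt ℝ s x ∧ ∀ᶠ t in 𝓝 x, s t ^ 2 = f t := by
  rcases hsign with hnn | hnp
  · obtain ⟨g, hg, hgf⟩ := hf.exists_sq_eq_of_eventually_nonneg hnn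
    exact ⟨fun t => g t, hg.ofReal, hgf.mono fun t ht => by dsimp only; exact_mod_cast ht⟩
  · have hf' : AnalyticAt ℝ (fun t => -f t) x := hf.neg
    obtain ⟨g, hg, hgf⟩ := hf'.exists_sq_eq_of_eventually_nonneg (hnp.mono fun t => neg_nonneg.2)
    refine ⟨fun t => I * g t, analyticAt_const.mul hg.ofReal, hgf.mono fun t ht => ?_⟩
    rw [mul_pow, I_sq, ← ofReal_pow, ht]
    push_cast
    ring

/-- If `P(t,z) = z² + p₁(t) z + p₀(t)` has real-valued coefficients
real-analytic near `0 ∈ ℝ`, and for all `t` near `0` both complex roots of `P(t,·)` have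
modulus `1`, then `P` is completely reducible: there are `δ > 0` and real-analytic
`λ₊, λ₋ : (-δ,δ) → ℂ` with `P(t,z) = (z - λ₊(t))(z - λ₋(t))` for `|t| < δ`. -/
theorem stmt_5 (p0 p1 : ℝ → ℝ)
    (h0 : AnalyticAt ℝ p0 0) (h1 : AnalyticAt ℝ p1 0)
    (hmod : ∃ ε : ℝ, 0 < ε ∧ ∀ t ∈ Set.Ioo (-ε) ε, ∀ z : ℂ,
      z ^ 2 + (p1 t : ℂ) * z + (p0 t : ℂ) = 0 → ‖z‖ = 1) :
    ∃ δ : ℝ, 0 < δ ∧ ∃ lamP lamM : ℝ → ℂ,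
      AnalyticOnNhd ℝ lamP (Set.Ioo (-δ) δ) ∧
      AnalyticOnNhd ℝ lamM (Set.Ioo (-δ) δ) ∧
      ∀ t ∈ Set.Ioo (-δ) δ, ∀ z : ℂ,
        z ^ 2 + (p1 t : ℂ) * z + (p0 t : ℂ) = (z - lamP t) * (z - lamM t) := by
  obtain ⟨ε, hε, hroots⟩ := hmod
  have hD : AnalyticAt ℝ (fun t => p1 t ^ 2 - 4 * p0 t) 0 := by fun_prop
  obtain ⟨s, hs, hs2⟩ := hD.exists_complex_sq_eq
    (eventually_discrim_nonneg_or_nonpos h0.continuousAt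
      (eventually_of_mem (Ioo_mem_nhds (neg_neg_of_pos hε) hε) hroots))
  have hP : AnalyticAt ℝ (fun t => (-(p1 t : ℂ) + s t) / 2) 0 := (h1.ofReal.neg.add hs).div_const
  have hM : AnalyticAt ℝ (fun t => (-(p1 t : ℂ) - s t) / 2) 0 := (h1.ofReal.neg.sub hs).div_const
  obtain ⟨δ, hδ, hball⟩ := Metric.eventually_nhds_iff_ball.mp
    (hP.eventually_analyticAt.and (hM.eventually_analyticAt.and hs2))
  rw [Real.ball_zero_eq_Ioo] at hball
  refine ⟨δ, hδ, _, _, fun t ht => (hball t ht).1, fun t ht => (hball t ht).2.1, fun t ht z => ?_⟩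
  exact quadratic_eq_mul_of_sq_eq_discrim (by rw [(hball t ht).2.2]; push_cast; ring) z
end

section
/- Let Q(t,z) = z² + q₁(t)z + q₀(t) with q₀, q₁ real-analytic complex-valued functions on a neighborhood of 0 in ℝ, and suppose the discriminant D(t) = q₁(t)² − 4q₀(t) is not identically zero near 0; let k = ord(D) be the order of vanishing of D at 0. Then: (i) Q is completely reducible (there exist δ > 0 and real-analytic η₁, η₂ : (−δ,δ) → ℂ with Q(t,z) = (z − η₁(t))(z − η₂(t)) for |t| < δ) if and only if k is even; (ii) Q is irreducible in K₀[z] (i.e., admits no factorization into two monic degree-1 factors with coefficients real-analytic near 0) if and only if k is odd. -/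
/-!
`Q` splits into analytic roots near `0` exactly when its discriminant `D` is the square of an
analytic germ: a root `η` gives `D = (2η + q₁)²`, and conversely the quadratic formula
`(-q₁ ± √D) / 2` produces the roots. Writing `D = t^k g` with `g 0 ≠ 0`, the germ `g` has an
analytic square root (a principal branch of `√(g / g 0)`), so `D` is a square when `k` is even,
while the order of vanishing of a square is always even. Irreducibility is the negation of
splitting.
-/

/-- `OrdAt f k` says that the order of vanishing of `f : ℝ → ℂ` at `0` is exactly `k`:
the `k`-th derivative at `0` is nonzero while all lower-order derivatives vanish at `0`. -/
def OrdAt (f : ℝ → ℂ) (k : ℕ) : Prop :=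
  iteratedDeriv k f 0 ≠ 0 ∧ ∀ l < k, iteratedDeriv l f 0 = 0

open Filter Topology

theorem ordAt_iff_analyticOrderAt_eq {f : ℝ → ℂ} {k : ℕ} (hf : AnalyticAt ℝ f 0) :
    OrdAt f k ↔ analyticOrderAt f 0 = k := by
  rw [analyticOrderAt_eq_nat_iff_iteratedDeriv_eq_zero hf, OrdAt, and_comm]

section AnalyticOrder

variable {𝕜 : Type*} [NontriviallyNormedField 𝕜]

theorem AnalyticAt.analyticOrderAt_pow {A : Type*} [NormedField A] [NormedAlgebra 𝕜 A]
    {f : 𝕜 → A} {x : 𝕜} (hf : AnalyticAt 𝕜 f x) (n : ℕ) :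
    analyticOrderAt (f ^ n) x = n • analyticOrderAt f x := by
  rcases eq_or_ne n 0 with rfl | hn
  · simp [analyticOrderAt_eq_zero]
  cases h : analyticOrderAt f x with
  | top =>
    rw [nsmul_eq_mul, ENat.mul_top (by exact_mod_cast hn), analyticOrderAt_eq_top]
    rw [analyticOrderAt_eq_top] at h
    filter_upwards [h] with y hy
    simp [hy, hn]
  | coe m =>
    obtain ⟨e, he, hex, hfe⟩ := hf.analyticOrderAt_eq_natCast.mp h
    rw [nsmul_eq_mul, ← Nat.cast_mul, (hf.pow n).analyticOrderAt_eq_natCast]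
    refine ⟨e ^ n, he.pow n, pow_ne_zero n hex, ?_⟩
    filter_upwards [hfe] with y hy
    simp [hy, smul_pow, ← pow_mul, mul_comm]

variable [NormedAlgebra 𝕜 ℂ]

theorem AnalyticAt.exists_sq_eq {g : 𝕜 → ℂ} {x : 𝕜} (hg : AnalyticAt 𝕜 g x) (hgx : g x ≠ 0) :
    ∃ s : 𝕜 → ℂ, AnalyticAt 𝕜 s x ∧ s ^ 2 = g := by
  -- the principal square root is analytic near `g y / g x ≈ 1`
  have hroot : AnalyticAt ℂ (fun u : ℂ => u ^ ((2 : ℕ)⁻¹ : ℂ)) 1 :=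
    analyticAt_id.cpow analyticAt_const Complex.one_mem_slitPlane
  refine ⟨fun y => g x ^ ((2 : ℕ)⁻¹ : ℂ) * (g y / g x) ^ ((2 : ℕ)⁻¹ : ℂ), ?_, ?_⟩
  · refine analyticAt_const.mul (hroot.restrictScalars.comp_of_eq hg.div_const ?_)
    simp [hgx]
  · ext y
    simp only [Pi.pow_apply, mul_pow, Complex.cpow_nat_inv_pow _ two_ne_zero]
    field_simp

theorem AnalyticAt.exists_eventuallyEq_sq_iff_even {f : 𝕜 → ℂ} {x : 𝕜} {k : ℕ}
    (hf : AnalyticAt 𝕜 f x) (hk : analyticOrderAt f x = k) :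
    (∃ d : 𝕜 → ℂ, AnalyticAt 𝕜 d x ∧ f =ᶠ[𝓝 x] d ^ 2) ↔ Even k := by
  constructor
  · rintro ⟨d, hd, hfd⟩
    rw [analyticOrderAt_congr hfd, hd.analyticOrderAt_pow] at hk
    cases h : analyticOrderAt d x with
    | top => simp [h] at hk
    | coe m =>
      rw [h, nsmul_eq_mul] at hk
      norm_cast at hk
      exact ⟨m, by omega⟩
  · rintro ⟨m, rfl⟩
    obtain ⟨g, hg, hgx, hfg⟩ := hf.analyticOrderAt_eq_natCast.mp hk
    obtain ⟨s, hs, rfl⟩ := hg.exists_sq_eq hgx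
    refine ⟨fun y => (y - x) ^ m • s y, by fun_prop, ?_⟩
    filter_upwards [hfg] with y hy
    simp [hy, smul_pow, ← pow_mul, mul_two]

end AnalyticOrder

def AnalyticallySplits (q0 q1 : ℝ → ℂ) : Prop :=
  ∃ δ : ℝ, 0 < δ ∧ ∃ η₁ η₂ : ℝ → ℂ,
    AnalyticOnNhd ℝ η₁ (Set.Ioo (-δ) δ) ∧ AnalyticOnNhd ℝ η₂ (Set.Ioo (-δ) δ) ∧
    ∀ t ∈ Set.Ioo (-δ) δ, ∀ z : ℂ, z ^ 2 + q1 t * z + q0 t = (z - η₁ t) * (z - η₂ t)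

theorem analyticallySplits_iff_exists_add_mul_add {q0 q1 : ℝ → ℂ} :
    AnalyticallySplits q0 q1 ↔ ∃ δ : ℝ, 0 < δ ∧ ∃ b c : ℝ → ℂ,
      AnalyticOnNhd ℝ b (Set.Ioo (-δ) δ) ∧ AnalyticOnNhd ℝ c (Set.Ioo (-δ) δ) ∧
      ∀ t ∈ Set.Ioo (-δ) δ, ∀ z : ℂ, z ^ 2 + q1 t * z + q0 t = (z + b t) * (z + c t) := by
  constructor <;> rintro ⟨δ, hδ, η₁, η₂, hη₁, hη₂, hfac⟩ <;>
    refine ⟨δ, hδ, -η₁, -η₂, fun t ht => (hη₁ t ht).neg, fun t ht => (hη₂ t ht).neg,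
      fun t ht z => ?_⟩ <;> simp [hfac t ht z, sub_eq_add_neg]

theorem analyticallySplits_iff_exists_eventuallyEq_sq {q0 q1 : ℝ → ℂ} (h1 : AnalyticAt ℝ q1 0) :
    AnalyticallySplits q0 q1 ↔
      ∃ d : ℝ → ℂ, AnalyticAt ℝ d 0 ∧ (fun t => q1 t ^ 2 - 4 * q0 t) =ᶠ[𝓝 0] d ^ 2 := by
  constructor
  · rintro ⟨δ, hδ, η₁, _, hη₁, _, hfac⟩
    have hmem : Set.Ioo (-δ) δ ∈ 𝓝 (0 : ℝ) := Ioo_mem_nhds (neg_neg_iff_pos.mpr hδ) hδ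
    -- `η₁` is a root, so completing the square gives `D = (2 η₁ + q₁)²`
    refine ⟨fun t => 2 * η₁ t + q1 t,
      (analyticAt_const.mul (hη₁ 0 (mem_of_mem_nhds hmem))).add h1, ?_⟩
    filter_upwards [hmem] with t ht
    have hroot := hfac t ht (η₁ t)
    simp only [sub_self, zero_mul] at hroot
    simp only [Pi.pow_apply]
    linear_combination (-4) * hroot
  · rintro ⟨d, hd, hD⟩
    have hnear : ∀ᶠ t in 𝓝 (0 : ℝ), (AnalyticAt ℝ q1 t ∧ AnalyticAt ℝ d t) ∧
        q1 t ^ 2 - 4 * q0 t = d t ^ 2 := by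
      filter_upwards [h1.eventually_analyticAt, hd.eventually_analyticAt, hD] with t h1t hdt hDt
      exact ⟨⟨h1t, hdt⟩, hDt⟩
    obtain ⟨δ, hδ, hball⟩ := Metric.eventually_nhds_iff_ball.mp hnear
    rw [Real.ball_eq_Ioo, zero_sub, zero_add] at hball
    -- the quadratic formula
    refine ⟨δ, hδ, fun t => (-q1 t + d t) / 2, fun t => (-q1 t - d t) / 2,
      fun t ht => ((hball t ht).1.1.neg.add (hball t ht).1.2).div_const,
      fun t ht => ((hball t ht).1.1.neg.sub (hball t ht).1.2).div_const,
      fun t ht z => ?_⟩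
    linear_combination (-1 / 4 : ℂ) * (hball t ht).2

/-- Let `Q(t,z) = z² + q₁(t) z + q₀(t)` with `q₀, q₁` real-analytic near
`0 ∈ ℝ`, whose discriminant `D(t) = q₁(t)² - 4 q₀(t)` has finite order of vanishing
`k = ord(D)` at `0`.  Then (i) `Q` is completely reducible iff `k` is even, and
(ii) `Q` is irreducible in `K₀[z]` iff `k` is odd. -/
theorem stmt_10 (q0 q1 : ℝ → ℂ)
    (h0 : AnalyticAt ℝ q0 0) (h1 : AnalyticAt ℝ q1 0)
    (k : ℕ) (hk : OrdAt (fun t => q1 t ^ 2 - 4 * q0 t) k) :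
    ((∃ δ : ℝ, 0 < δ ∧ ∃ η₁ η₂ : ℝ → ℂ,
        AnalyticOnNhd ℝ η₁ (Set.Ioo (-δ) δ) ∧ AnalyticOnNhd ℝ η₂ (Set.Ioo (-δ) δ) ∧
        ∀ t ∈ Set.Ioo (-δ) δ, ∀ z : ℂ,
          z ^ 2 + q1 t * z + q0 t = (z - η₁ t) * (z - η₂ t)) ↔ Even k)
    ∧
    ((¬ ∃ δ : ℝ, 0 < δ ∧ ∃ b c : ℝ → ℂ,
        AnalyticOnNhd ℝ b (Set.Ioo (-δ) δ) ∧ AnalyticOnNhd ℝ c (Set.Ioo (-δ) δ) ∧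
        ∀ t ∈ Set.Ioo (-δ) δ, ∀ z : ℂ,
          z ^ 2 + q1 t * z + q0 t = (z + b t) * (z + c t)) ↔ Odd k) := by
  have hD : AnalyticAt ℝ (fun t => q1 t ^ 2 - 4 * q0 t) 0 := by fun_prop
  have hsplits : AnalyticallySplits q0 q1 ↔ Even k :=
    (analyticallySplits_iff_exists_eventuallyEq_sq h1).trans
      (hD.exists_eventuallyEq_sq_iff_even ((ordAt_iff_analyticOrderAt_eq hD).mp hk))
  refine ⟨hsplits, ?_⟩
  rw [← analyticallySplits_iff_exists_add_mul_add, hsplits, Nat.not_even_iff_odd]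
end

section
/- Let P(t,z) = zⁿ + p_{n−1}(t)z^{n−1} + ⋯ + p_0(t) with n ≥ 2, where each p_j : ℝ → ℂ is real-analytic and 1-periodic. Assume P is simple (no monic Q ∈ K[z] of degree ≥ 1 with Q² dividing P in K[z]) and locally completely reducible: for every s ∈ ℝ there exist δ > 0 and real-analytic functions λ₁, …, λₙ on (s−δ, s+δ) with P(t,z) = ∏_{j=1}^{n}(z − λ_j(t)) for |t−s| < δ. Then there exists an integer k ≥ 0 such that for every s ∈ ℝ and every such local factorization near s, the k-jets (λ_j(s), λ_j′(s), …, λ_j^{(k)}(s)) ∈ ℂ^{k+1}, j = 1, …, n, are pairwise distinct. -/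
/-!
The local analytic factorizations continue, by the identity theorem, to a single factorization
`P(t, z) = ∏ᵢ (z - Λᵢ(t))` on all of `ℝ`, and the shift `t ↦ t + 1` permutes the root functions
`Λᵢ`. If two of them coincided, the product of `z - f(t)` over the repeated root functions `f`
would be a periodic analytic `Q` with `Q² ∣ P`; so by simplicity the `Λᵢ` are pairwise distinct,
hence have distinct infinite jets at every point. Jets of some finite order `k` then separate them
on the compact set `[0, 1]`, and every local factorization at `s` is a permutation of the `Λᵢ`
translated by `⌊s⌋`.
-/

open Set Filter Topology Polynomial Function

theorem exists_equiv_of_map_univ_eq {α β γ : Type*} [Fintype α] [Fintype β] [DecidableEq γ]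
    {f : α → γ} {g : β → γ} (h : Finset.univ.val.map f = Finset.univ.val.map g) :
    ∃ e : α ≃ β, ∀ a, g (e a) = f a := by
  have hcard (c : γ) : Fintype.card {a // f a = c} = Fintype.card {b // g b = c} := by
    simpa [Multiset.count_map, Fintype.card_subtype, Finset.card_def, Finset.filter_val, eq_comm]
      using congrArg (Multiset.count c) h
  exact ⟨.ofFiberEquiv fun c => Fintype.equivOfCardEq (hcard c), Equiv.ofFiberEquiv_map _⟩

theorem IsPreconnected.inter {α : Type*} [ConditionallyCompleteLinearOrder α]
    [TopologicalSpace α] [OrderTopology α] [DenselyOrdered α] {s t : Set α} (hs : IsPreconnected s)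
    (ht : IsPreconnected t) : IsPreconnected (s ∩ t) :=
  isPreconnected_iff_ordConnected.mpr <|
    (isPreconnected_iff_ordConnected.mp hs).inter (isPreconnected_iff_ordConnected.mp ht)

namespace Multiset

variable {α β : Type*} [DecidableEq α] [DecidableEq β]

def repeats (M : Multiset α) : Multiset α :=
  M.dedup.filter fun a => 2 ≤ M.count a

theorem count_repeats (M : Multiset α) (a : α) :
    M.repeats.count a = if 2 ≤ M.count a then 1 else 0 := by
  by_cases h : 2 ≤ M.count a
  · have : a ∈ M := count_pos.mp (by omega)
    simp [repeats, h, this]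
  · simp [repeats, h]

theorem two_nsmul_repeats_le (M : Multiset α) : 2 • M.repeats ≤ M := by
  rw [le_iff_count]
  intro a
  rw [count_nsmul, count_repeats]
  split_ifs <;> omega

theorem repeats_ne_zero {M : Multiset α} {a : α} (h : 2 ≤ M.count a) : M.repeats ≠ 0 :=
  fun h0 => by simpa [h0, h] using count_repeats M a

theorem repeats_map_of_injective {f : α → β} (hf : Injective f) (M : Multiset α) :
    (M.map f).repeats = M.repeats.map f := by
  simp only [repeats, dedup_map_of_injective hf, filter_map]
  congr 2
  ext a
  simp [count_map_eq_count' f M hf]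

end Multiset

theorem Polynomial.eval_eq_sum_fin {R : Type*} [Semiring R] {q : R[X]} {m : ℕ}
    (hq : q.natDegree < m) (z : R) :
    q.eval z = ∑ j : Fin m, q.coeff j * z ^ (j : ℕ) := by
  rw [eval_eq_sum_range' hq, Fin.sum_univ_eq_sum_range (fun j => q.coeff j * z ^ j)]

theorem Polynomial.Monic.eval_eq_pow_add_sum_fin {R : Type*} [Semiring R] {q : R[X]}
    (hq : q.Monic) (z : R) :
    q.eval z = z ^ q.natDegree + ∑ j : Fin q.natDegree, q.coeff j * z ^ (j : ℕ) := by
  rw [eval_eq_sum_fin (Nat.lt_succ_self _), Fin.sum_univ_castSucc]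
  simp [hq.coeff_natDegree, add_comm]

noncomputable def rootPolyAt (S : Multiset (ℝ → ℂ)) (t : ℝ) : ℂ[X] :=
  (S.map fun f => X - C (f t)).prod

theorem rootPolyAt_monic (S : Multiset (ℝ → ℂ)) (t : ℝ) : (rootPolyAt S t).Monic :=
  monic_multiset_prod_of_monic _ _ fun f _ => monic_X_sub_C (f t)

theorem natDegree_rootPolyAt (S : Multiset (ℝ → ℂ)) (t : ℝ) :
    (rootPolyAt S t).natDegree = Multiset.card S := by
  rw [rootPolyAt, natDegree_multiset_prod_of_monic]
  · simp
  · simp only [Multiset.mem_map]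
    rintro _ ⟨f, -, rfl⟩
    exact monic_X_sub_C _

theorem rootPolyAt_add (S T : Multiset (ℝ → ℂ)) (t : ℝ) :
    rootPolyAt (S + T) t = rootPolyAt S t * rootPolyAt T t := by
  simp [rootPolyAt]

theorem rootPolyAt_map_comp_add (S : Multiset (ℝ → ℂ)) (c t : ℝ) :
    rootPolyAt (S.map fun f u => f (u + c)) t = rootPolyAt S (t + c) := by
  simp [rootPolyAt, Multiset.map_map]

theorem eval_rootPolyAt_univ_map {ι : Type*} [Fintype ι] (lam : ι → ℝ → ℂ) (t : ℝ) (z : ℂ) :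
    (rootPolyAt (Finset.univ.val.map lam) t).eval z = ∏ i, (z - lam i t) := by
  simp [rootPolyAt, eval_prod, Finset.prod_map_val]

theorem analyticAt_coeff_rootPolyAt {S : Multiset (ℝ → ℂ)} {t : ℝ}
    (hS : ∀ f ∈ S, AnalyticAt ℝ f t) (j : ℕ) :
    AnalyticAt ℝ (fun u => (rootPolyAt S u).coeff j) t := by
  induction S using Multiset.induction generalizing j with
  | empty => simpa [rootPolyAt, coeff_one] using analyticAt_const
  | cons f S ih =>
    have hf := hS f (Multiset.mem_cons_self f S)
    have ih' := ih fun g hg => hS g (Multiset.mem_cons_of_mem hg)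
    simp only [rootPolyAt, Multiset.map_cons, Multiset.prod_cons] at ih' ⊢
    cases j with
    | zero => simpa [sub_mul, mul_coeff_zero] using (hf.fun_mul (ih' 0)).fun_neg
    | succ j => simpa [sub_mul, coeff_X_mul] using (ih' j).fun_sub (hf.fun_mul (ih' (j + 1)))

theorem rootPolyAt_nsmul (k : ℕ) (S : Multiset (ℝ → ℂ)) (t : ℝ) :
    rootPolyAt (k • S) t = rootPolyAt S t ^ k := by
  simp [rootPolyAt, Multiset.map_nsmul, Multiset.prod_nsmul]

theorem rootPolyAt_eq_sq_mul_tsub [DecidableEq (ℝ → ℂ)] {M N : Multiset (ℝ → ℂ)} (h : 2 • N ≤ M)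
    (t : ℝ) :
    rootPolyAt M t = rootPolyAt N t ^ 2 * rootPolyAt (M - 2 • N) t := by
  conv_lhs => rw [← add_tsub_cancel_of_le h]
  rw [rootPolyAt_add, rootPolyAt_nsmul]

theorem rootPolyAt_periodic {S : Multiset (ℝ → ℂ)} {c : ℝ}
    (hS : S.map (fun f u => f (u + c)) = S) : Periodic (rootPolyAt S) c := fun t => by
  rw [← rootPolyAt_map_comp_add, hS]

structure IsAnalyticFactorizationOn {ι : Type*} [Fintype ι] (P : ℝ → ℂ → ℂ)
    (lam : ι → ℝ → ℂ) (U : Set ℝ) : Prop where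
  analyticOnNhd : ∀ i, AnalyticOnNhd ℝ (lam i) U
  eq_prod : ∀ t ∈ U, ∀ z, P t z = ∏ i, (z - lam i t)

theorem exists_mem_eqOn_of_forall_exists_eq {U : Set ℝ} (hUo : IsOpen U)
    (hUc : IsPreconnected U) (hUne : U.Nonempty) {f : ℝ → ℂ} {S : Multiset (ℝ → ℂ)}
    (hf : AnalyticOnNhd ℝ f U) (hS : ∀ g ∈ S, AnalyticOnNhd ℝ g U)
    (h : ∀ t ∈ U, ∃ g ∈ S, f t = g t) : ∃ g ∈ S, EqOn f g U := by
  classical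
  obtain ⟨t₀, ht₀⟩ := hUne
  have hev : ∀ᶠ t in 𝓝[≠] t₀, ∃ g ∈ S.toFinset, f t = g t :=
    eventually_nhdsWithin_of_eventually_nhds <|
      Filter.mem_of_superset (hUo.mem_nhds ht₀) fun t ht => by simpa using h t ht
  obtain ⟨g, hg, hfreq⟩ := (Finset.frequently_exists _).mp hev.frequently
  rw [Multiset.mem_toFinset] at hg
  exact ⟨g, hg, hf.eqOn_of_preconnected_of_frequently_eq (hS g hg) hUc ht₀ hfreq⟩

theorem map_domRestrict_eq_of_forall_map_eq {U : Set ℝ} (hUo : IsOpen U)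
    (hUc : IsPreconnected U) (hUne : U.Nonempty) {M N : Multiset (ℝ → ℂ)}
    (hM : ∀ f ∈ M, AnalyticOnNhd ℝ f U) (hN : ∀ g ∈ N, AnalyticOnNhd ℝ g U)
    (h : ∀ t ∈ U, M.map (fun f => f t) = N.map (fun g => g t)) :
    M.map U.domRestrict = N.map U.domRestrict := by
  classical
  induction M using Multiset.induction generalizing N with
  | empty =>
    obtain ⟨t, ht⟩ := hUne
    simp [Multiset.map_eq_zero.mp (h t ht).symm]
  | cons f M ih =>
    have hfM := Multiset.mem_cons_self f M
    have hroot (t : ℝ) (ht : t ∈ U) : ∃ g ∈ N, f t = g t := by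
      have := h t ht ▸ Multiset.mem_map_of_mem (fun f' : ℝ → ℂ => f' t) hfM
      simpa [eq_comm] using this
    obtain ⟨g, hgN, hfg⟩ := exists_mem_eqOn_of_forall_exists_eq hUo hUc hUne (hM f hfM) hN hroot
    rw [← Multiset.cons_erase hgN] at h ⊢
    have hrest : M.map U.domRestrict = (N.erase g).map U.domRestrict :=
      ih (fun f' hf' => hM f' (Multiset.mem_cons_of_mem hf'))
        (fun g' hg' => hN g' (Multiset.mem_of_mem_erase hg')) fun t ht => by
          simpa [hfg ht] using h t ht
    simp [hrest, Set.domRestrict_eq_domRestrict_iff.mpr hfg]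

theorem map_univ_eq_of_prod_sub_eq {ι : Type*} [Fintype ι] {a b : ι → ℂ}
    (h : ∀ z, ∏ i, (z - a i) = ∏ i, (z - b i)) :
    Finset.univ.val.map a = Finset.univ.val.map b := by
  have hroots (c : ι → ℂ) : (∏ i, (X - C (c i))).roots = Finset.univ.val.map c := by
    simpa [Multiset.map_map, comp_def, Finset.prod_map_val] using
      roots_multiset_prod_X_sub_C (Finset.univ.val.map c)
  rw [← hroots, ← hroots]
  exact congrArg roots (Polynomial.funext fun z => by simpa [eval_prod] using h z)

namespace IsAnalyticFactorizationOn

variable {ι : Type*} [Fintype ι] {P : ℝ → ℂ → ℂ} {lam mu : ι → ℝ → ℂ} {U V : Set ℝ}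

theorem mono (h : IsAnalyticFactorizationOn P lam U) (hVU : V ⊆ U) :
    IsAnalyticFactorizationOn P lam V :=
  ⟨fun i => (h.analyticOnNhd i).mono hVU, fun t ht => h.eq_prod t (hVU ht)⟩

theorem congr (h : IsAnalyticFactorizationOn P lam U) (hU : IsOpen U)
    (hmu : ∀ i, EqOn (lam i) (mu i) U) : IsAnalyticFactorizationOn P mu U :=
  ⟨fun i => (h.analyticOnNhd i).congr hU (hmu i), fun t ht z => by
    simp only [h.eq_prod t ht z, hmu _ ht]⟩

theorem union (hU : IsAnalyticFactorizationOn P lam U) (hV : IsAnalyticFactorizationOn P lam V) :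
    IsAnalyticFactorizationOn P lam (U ∪ V) :=
  ⟨fun i t ht => ht.elim (hU.analyticOnNhd i t) (hV.analyticOnNhd i t),
    fun t ht => ht.elim (hU.eq_prod t) (hV.eq_prod t)⟩

theorem comp_equiv (h : IsAnalyticFactorizationOn P lam U) (e : ι ≃ ι) :
    IsAnalyticFactorizationOn P (fun i => lam (e i)) U :=
  ⟨fun i => h.analyticOnNhd (e i), fun t ht z => by
    rw [h.eq_prod t ht z, e.prod_comp fun i => z - lam i t]⟩

theorem comp_add_const (h : IsAnalyticFactorizationOn P lam univ) {c : ℝ} (hP : Periodic P c) :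
    IsAnalyticFactorizationOn P (fun i t => lam i (t + c)) univ :=
  ⟨fun i t _ => (h.analyticOnNhd i (t + c) trivial).comp (f := (· + c))
      (analyticAt_id.add analyticAt_const),
    fun t _ z => by rw [← hP t, h.eq_prod (t + c) trivial z]⟩

theorem exists_equiv_eqOn (hlam : IsAnalyticFactorizationOn P lam U)
    (hmu : IsAnalyticFactorizationOn P mu U) (hUo : IsOpen U) (hUc : IsPreconnected U)
    (hUne : U.Nonempty) : ∃ e : ι ≃ ι, ∀ i, EqOn (mu (e i)) (lam i) U := by
  classical
  have hmap := map_domRestrict_eq_of_forall_map_eq hUo hUc hUne (M := Finset.univ.val.map lam)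
    (N := Finset.univ.val.map mu) (by simpa using hlam.analyticOnNhd)
    (by simpa using hmu.analyticOnNhd) fun t ht => by
      simpa [Multiset.map_map, comp_def] using map_univ_eq_of_prod_sub_eq fun z =>
        (hlam.eq_prod t ht z).symm.trans (hmu.eq_prod t ht z)
  rw [Multiset.map_map, Multiset.map_map] at hmap
  obtain ⟨e, he⟩ := exists_equiv_of_map_univ_eq hmap
  exact ⟨e, fun i => Set.domRestrict_eq_domRestrict_iff.mp (he i)⟩

end IsAnalyticFactorizationOn

namespace IsAnalyticFactorizationOn

variable {ι : Type*} [Fintype ι] {P : ℝ → ℂ → ℂ}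

theorem exists_union {lam mu : ι → ℝ → ℂ} {U V : Set ℝ}
    (hlam : IsAnalyticFactorizationOn P lam U) (hmu : IsAnalyticFactorizationOn P mu V)
    (hU : IsOpen U) (hV : IsOpen V)
    (hUV : IsPreconnected (U ∩ V)) (hne : (U ∩ V).Nonempty) :
    ∃ nu : ι → ℝ → ℂ, IsAnalyticFactorizationOn P nu (U ∪ V) := by
  classical
  obtain ⟨e, he⟩ := (hlam.mono inter_subset_left).exists_equiv_eqOn
    (hmu.mono inter_subset_right) (hU.inter hV) hUV hne
  refine ⟨fun i t => if t ∈ U then lam i t else mu (e i) t,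
    (hlam.congr hU fun i t ht => by simp [ht]).union
      ((hmu.comp_equiv e).congr hV fun i t ht => ?_)⟩
  by_cases htU : t ∈ U
  · simp [htU, he i ⟨htU, ht⟩]
  · simp [htU]

theorem exists_of_forall_nhds
    (hloc : ∀ s, ∃ U ∈ 𝓝 s, ∃ lam : ι → ℝ → ℂ, IsAnalyticFactorizationOn P lam U) (x y : ℝ) :
    ∃ U, IsOpen U ∧ IsPreconnected U ∧ x ∈ U ∧ y ∈ U ∧
      ∃ lam : ι → ℝ → ℂ, IsAnalyticFactorizationOn P lam U := by
  refine PreconnectedSpace.induction₂' (fun x y => ∃ U, IsOpen U ∧ IsPreconnected U ∧ x ∈ U ∧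
    y ∈ U ∧ ∃ lam : ι → ℝ → ℂ, IsAnalyticFactorizationOn P lam U)
    (fun x => ?_) ⟨fun x y z hxy hyz => ?_⟩ x y
  · obtain ⟨U, hU, lam, hlam⟩ := hloc x
    obtain ⟨ε, hε, hball⟩ := Metric.mem_nhds_iff.mp hU
    filter_upwards [Metric.ball_mem_nhds x hε] with y hy
    have hb := (convex_ball x ε).isPreconnected
    exact ⟨⟨_, Metric.isOpen_ball, hb, Metric.mem_ball_self hε, hy, lam, hlam.mono hball⟩,
      ⟨_, Metric.isOpen_ball, hb, hy, Metric.mem_ball_self hε, lam, hlam.mono hball⟩⟩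
  · obtain ⟨U, hUo, hUc, hxU, hyU, lam, hlam⟩ := hxy
    obtain ⟨V, hVo, hVc, hyV, hzV, mu, hmu⟩ := hyz
    exact ⟨U ∪ V, hUo.union hVo, hUc.union y hyU hyV hVc, .inl hxU, .inr hzV,
      hlam.exists_union hmu hUo hVo (hUc.inter hVc) ⟨y, hyU, hyV⟩⟩

/-- Local factorizations are reindexed to agree near `0` with a fixed one; by the identity
theorem any two reindexed ones then agree wherever both are defined. -/
theorem exists_univ_of_forall_nhds
    (hloc : ∀ s, ∃ U ∈ 𝓝 s, ∃ lam : ι → ℝ → ℂ, IsAnalyticFactorizationOn P lam U) :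
    ∃ Λ : ι → ℝ → ℂ, IsAnalyticFactorizationOn P Λ univ := by
  obtain ⟨U₀, hU₀o, hU₀c, h0, -, lam₀, hlam₀⟩ := exists_of_forall_nhds hloc 0 0
  have hnorm (x : ℝ) : ∃ U, IsOpen U ∧ IsPreconnected U ∧ x ∈ U ∧ 0 ∈ U ∧
      ∃ lam : ι → ℝ → ℂ, IsAnalyticFactorizationOn P lam U ∧ ∀ i, lam i =ᶠ[𝓝 0] lam₀ i := by
    obtain ⟨U, hUo, hUc, hx, h0U, lam, hlam⟩ := exists_of_forall_nhds hloc x 0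
    obtain ⟨e, he⟩ := (hlam₀.mono inter_subset_right).exists_equiv_eqOn
      (hlam.mono inter_subset_left) (hUo.inter hU₀o) (hUc.inter hU₀c) ⟨0, h0U, h0⟩
    exact ⟨U, hUo, hUc, hx, h0U, _, hlam.comp_equiv e,
      fun i => Filter.mem_of_superset ((hUo.inter hU₀o).mem_nhds ⟨h0U, h0⟩) (he i)⟩
  choose U hUo hUc hxU h0U lam hlam hlam₀ using hnorm
  have hagree (x y : ℝ) (i : ι) : EqOn (lam x i) (lam y i) (U x ∩ U y) :=
    (((hlam x).analyticOnNhd i).mono inter_subset_left).eqOn_of_preconnected_of_eventuallyEq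
      (((hlam y).analyticOnNhd i).mono inter_subset_right) ((hUc x).inter (hUc y))
      ⟨h0U x, h0U y⟩ ((hlam₀ x i).trans (hlam₀ y i).symm)
  refine ⟨fun i t => lam t i t, fun i x _ => ?_, fun t _ z => (hlam t).eq_prod t (hxU t) z⟩
  refine ((hlam x).analyticOnNhd i x (hxU x)).congr ?_
  filter_upwards [(hUo x).mem_nhds (hxU x)] with y hy using hagree x y i ⟨hy, hxU y⟩

end IsAnalyticFactorizationOn

/-- `zⁿ + ∑ pⱼ zʲ` is not simple in `K[z]`: it is `Q² R` with `Q ∈ K[z]` monic of degree `d ≥ 1`. -/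
def HasPeriodicAnalyticSquareFactor (n : ℕ) (p : Fin n → ℝ → ℂ) : Prop :=
  ∃ d : ℕ, 1 ≤ d ∧ ∃ qc : Fin d → ℝ → ℂ, ∃ r : Fin (n + 1) → ℝ → ℂ,
    (∀ j, ∀ t : ℝ, AnalyticAt ℝ (qc j) t) ∧ (∀ j, ∀ t : ℝ, qc j (t + 1) = qc j t) ∧
    (∀ j, ∀ t : ℝ, AnalyticAt ℝ (r j) t) ∧ (∀ j, ∀ t : ℝ, r j (t + 1) = r j t) ∧
    ∀ (t : ℝ) (z : ℂ),
      z ^ n + ∑ j, p j t * z ^ (j : ℕ) =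
        (z ^ d + ∑ j, qc j t * z ^ (j : ℕ)) ^ 2 * (∑ j, r j t * z ^ (j : ℕ))

theorem IsAnalyticFactorizationOn.map_comp_add_const_univ_map {ι : Type*} [Fintype ι]
    {P : ℝ → ℂ → ℂ} {Λ : ι → ℝ → ℂ} (hΛ : IsAnalyticFactorizationOn P Λ univ) {c : ℝ}
    (hP : Periodic P c) :
    (Finset.univ.val.map Λ).map (fun f u => f (u + c)) = Finset.univ.val.map Λ := by
  obtain ⟨e, he⟩ := hΛ.exists_equiv_eqOn (hΛ.comp_add_const hP) isOpen_univ
    isPreconnected_univ univ_nonempty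
  have hΛe : ((fun f u => f (u + c)) ∘ Λ) ∘ e = Λ := funext fun i => funext fun t => he i trivial
  calc _ = (Finset.univ.val.map e).map ((fun f u => f (u + c)) ∘ Λ) := by
        rw [Multiset.map_map, Multiset.map_univ_val_equiv]
    _ = Finset.univ.val.map Λ := by rw [Multiset.map_map, hΛe]

theorem hasPeriodicAnalyticSquareFactor_of_not_injective {n : ℕ} {p : Fin n → ℝ → ℂ}
    {Λ : Fin n → ℝ → ℂ}
    (hP : Periodic (fun t (z : ℂ) => z ^ n + ∑ j, p j t * z ^ (j : ℕ)) 1)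
    (hΛ : IsAnalyticFactorizationOn (fun t z => z ^ n + ∑ j, p j t * z ^ (j : ℕ)) Λ univ)
    (hinj : ¬ Injective Λ) : HasPeriodicAnalyticSquareFactor n p := by
  classical
  obtain ⟨a, b, hab, hne⟩ := not_injective_iff.mp hinj
  set M := Finset.univ.val.map Λ
  set N := M.repeats
  set R := M - 2 • N
  have hM := hΛ.map_comp_add_const_univ_map hP
  have hMN := rootPolyAt_eq_sq_mul_tsub (Multiset.two_nsmul_repeats_le M)
  have hshift : Injective fun (f : ℝ → ℂ) u => f (u + 1) := fun f g h => funext fun u => by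
    simpa using congrFun h (u - 1)
  have hQ : Periodic (rootPolyAt N) 1 :=
    rootPolyAt_periodic (by rw [← Multiset.repeats_map_of_injective hshift, hM])
  have hR : Periodic (rootPolyAt R) 1 := fun t =>
    mul_left_cancel₀ (pow_ne_zero 2 (rootPolyAt_monic N t).ne_zero) <| by
      rw [← hMN, ← hQ t, ← hMN, rootPolyAt_periodic hM]
  have han {S : Multiset (ℝ → ℂ)} (hS : S ≤ M) (j : ℕ) (t : ℝ) :
      AnalyticAt ℝ (fun u => (rootPolyAt S u).coeff j) t :=
    analyticAt_coeff_rootPolyAt (fun f hf => by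
      obtain ⟨i, -, rfl⟩ := Multiset.mem_map.mp (Multiset.mem_of_le hS hf)
      exact hΛ.analyticOnNhd i t trivial) j
  have hcount : 2 ≤ M.count (Λ a) := by
    rw [Multiset.count_map, ← Finset.filter_val]
    exact Finset.one_lt_card.mpr ⟨a, by simp, b, by simp [hab], hne⟩
  refine ⟨Multiset.card N, Multiset.card_pos.mpr (Multiset.repeats_ne_zero hcount),
    fun j t => (rootPolyAt N t).coeff j, fun j t => (rootPolyAt R t).coeff j,
    fun j => han (Multiset.dedup_le M |>.trans' (Multiset.filter_le _ _)) j,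
    fun j t => congrArg (coeff · j) (hQ t), fun j => han tsub_le_self j,
    fun j t => congrArg (coeff · j) (hR t), fun t z => ?_⟩
  have hRdeg : (rootPolyAt R t).natDegree < n + 1 := by
    rw [natDegree_rootPolyAt, Nat.lt_succ_iff]
    exact (Multiset.card_le_card tsub_le_self).trans_eq (by simp [M])
  rw [hΛ.eq_prod t trivial z, ← eval_rootPolyAt_univ_map, hMN, eval_mul, eval_pow,
    (rootPolyAt_monic N t).eval_eq_pow_add_sum_fin, natDegree_rootPolyAt, eval_eq_sum_fin hRdeg]

noncomputable def jet (k : ℕ) (f : ℝ → ℂ) (x : ℝ) : Fin (k + 1) → ℂ :=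
  fun l => iteratedDeriv l f x

theorem AnalyticOnNhd.eq_of_forall_iteratedDeriv_eq {f g : ℝ → ℂ} (hf : AnalyticOnNhd ℝ f univ)
    (hg : AnalyticOnNhd ℝ g univ) {x : ℝ} (h : ∀ l, iteratedDeriv l f x = iteratedDeriv l g x) :
    f = g := by
  have htop : analyticOrderAt (f - g) x = ⊤ := by
    refine ENat.eq_top_iff_forall_ge.mpr fun m =>
      (natCast_le_analyticOrderAt_iff_iteratedDeriv_eq_zero
        ((hf x trivial).sub (hg x trivial))).mpr fun l _ => ?_
    rw [iteratedDeriv_sub (hf x trivial).contDiffAt (hg x trivial).contDiffAt, h l, sub_self]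
  refine hf.eq_of_eventuallyEq hg (z₀ := x) ?_
  filter_upwards [analyticOrderAt_eq_top.mp htop] with y hy using sub_eq_zero.mp hy

theorem exists_forall_injective_jet {ι : Type*} [Finite ι] {Λ : ι → ℝ → ℂ}
    (hΛ : ∀ i, ContDiff ℝ ⊤ (Λ i)) {K : Set ℝ} (hK : IsCompact K)
    (h : ∀ x ∈ K, Injective fun i l => iteratedDeriv l (Λ i) x) :
    ∃ k, ∀ x ∈ K, Injective fun i => jet k (Λ i) x := by
  set W : ℕ → Set ℝ := fun k => {x | ∀ i j, i ≠ j → jet k (Λ i) x ≠ jet k (Λ j) x}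
  have hW : Monotone W := fun k k' hkk' x hx i j hij hjet => hx i j hij <|
    funext fun l => congrFun hjet (Fin.castLE (Nat.succ_le_succ hkk') l)
  have hWo (k : ℕ) : IsOpen (W k) := by
    have hjet (i : ι) : Continuous (jet k (Λ i)) :=
      continuous_pi fun l => (hΛ i).continuous_iteratedDeriv l (by simp)
    simp only [W, ofPred_forall]
    exact isOpen_iInter_of_finite fun i => isOpen_iInter_of_finite fun j =>
      isOpen_iInter_of_finite fun _ => isOpen_ne_fun (hjet i) (hjet j)
  have hcover : K ⊆ ⋃ k, W k := by
    intro x hx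
    have hev : ∀ᶠ k in atTop, x ∈ W k := by
      refine eventually_all.mpr fun i => eventually_all.mpr fun j => ?_
      by_cases hij : i = j
      · exact .of_forall fun _ h => absurd hij h
      obtain ⟨l, hl⟩ := Function.ne_iff.mp ((h x hx).ne hij)
      filter_upwards [eventually_ge_atTop l] with k hk _ hjet
      exact hl (congrFun hjet ⟨l, Nat.lt_succ_of_le hk⟩)
    exact mem_iUnion.mpr hev.exists
  obtain ⟨k, hk⟩ := hK.elim_directed_cover W hWo hcover hW.directed_le
  exact ⟨k, fun x hx i j hij => by_contra fun hne => hk hx i j hne hij⟩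

namespace IsAnalyticFactorizationOn

variable {ι : Type*} [Fintype ι] {P : ℝ → ℂ → ℂ} {Λ lam : ι → ℝ → ℂ}

theorem exists_equiv_iteratedDeriv_eq_fract (hΛ : IsAnalyticFactorizationOn P Λ univ)
    (hP : Periodic P 1) {U : Set ℝ} (hlam : IsAnalyticFactorizationOn P lam U) (hUo : IsOpen U)
    (hUc : IsPreconnected U) {s : ℝ} (hs : s ∈ U) :
    ∃ e : ι ≃ ι, ∀ i l, iteratedDeriv l (lam i) s = iteratedDeriv l (Λ (e i)) (Int.fract s) := by
  have hPs : Periodic P (-⌊s⌋) := by simpa using hP.int_mul (-⌊s⌋)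
  obtain ⟨e, he⟩ := hlam.exists_equiv_eqOn ((hΛ.comp_add_const hPs).mono (subset_univ U)) hUo hUc
    ⟨s, hs⟩
  refine ⟨e, fun i l => ?_⟩
  have hev : (fun t => Λ (e i) (t + -⌊s⌋)) =ᶠ[𝓝 s] lam i :=
    Filter.mem_of_superset (hUo.mem_nhds hs) (he i)
  rw [← hev.iteratedDeriv_eq l, iteratedDeriv_comp_add_const, ← Int.self_sub_floor, sub_eq_add_neg]

end IsAnalyticFactorizationOn

theorem stmt_15_general (n : ℕ) (p : Fin n → ℝ → ℂ)
    (hp_per : ∀ j, ∀ t : ℝ, p j (t + 1) = p j t)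
    (hsimple : ¬ ∃ d : ℕ, 1 ≤ d ∧ ∃ qc : Fin d → ℝ → ℂ, ∃ r : Fin (n + 1) → ℝ → ℂ,
      (∀ j, ∀ t : ℝ, AnalyticAt ℝ (qc j) t) ∧ (∀ j, ∀ t : ℝ, qc j (t + 1) = qc j t) ∧
      (∀ j, ∀ t : ℝ, AnalyticAt ℝ (r j) t) ∧ (∀ j, ∀ t : ℝ, r j (t + 1) = r j t) ∧
      ∀ (t : ℝ) (z : ℂ),
        z ^ n + ∑ j, p j t * z ^ (j : ℕ) =
          (z ^ d + ∑ j, qc j t * z ^ (j : ℕ)) ^ 2 * (∑ j, r j t * z ^ (j : ℕ)))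
    (hLCR : ∀ s : ℝ, ∃ δ : ℝ, 0 < δ ∧ ∃ lam : Fin n → ℝ → ℂ,
      (∀ i, AnalyticOnNhd ℝ (lam i) (Set.Ioo (s - δ) (s + δ))) ∧
      ∀ t ∈ Set.Ioo (s - δ) (s + δ), ∀ z : ℂ,
        z ^ n + ∑ j, p j t * z ^ (j : ℕ) = ∏ i, (z - lam i t)) :
    ∃ k : ℕ, ∀ s : ℝ, ∀ δ : ℝ, 0 < δ → ∀ lam : Fin n → ℝ → ℂ,
      (∀ i, AnalyticOnNhd ℝ (lam i) (Set.Ioo (s - δ) (s + δ))) →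
      (∀ t ∈ Set.Ioo (s - δ) (s + δ), ∀ z : ℂ,
        z ^ n + ∑ j, p j t * z ^ (j : ℕ) = ∏ i, (z - lam i t)) →
      ∀ i j : Fin n, i ≠ j →
        (fun l : Fin (k + 1) => iteratedDeriv (l : ℕ) (lam i) s)
          ≠ (fun l : Fin (k + 1) => iteratedDeriv (l : ℕ) (lam j) s) := by
  let P : ℝ → ℂ → ℂ := fun t z => z ^ n + ∑ j, p j t * z ^ (j : ℕ)
  have hP : Periodic P 1 := fun t => by
    have hpt (j : Fin n) : p j (t + 1) = p j t := hp_per j t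
    simp only [P, hpt]
  obtain ⟨Λ, hΛ⟩ := IsAnalyticFactorizationOn.exists_univ_of_forall_nhds (P := P) fun s => by
    obtain ⟨δ, hδ, lam, hlam, hfac⟩ := hLCR s
    exact ⟨_, Ioo_mem_nhds (by linarith) (by linarith), lam, hlam, hfac⟩
  have hinj : Injective Λ := by
    by_contra h
    exact hsimple (hasPeriodicAnalyticSquareFactor_of_not_injective hP hΛ h)
  obtain ⟨k, hk⟩ := exists_forall_injective_jet (fun i => (hΛ.analyticOnNhd i).contDiff)
    isCompact_Icc fun x _ i j h => hinj <| (hΛ.analyticOnNhd i).eq_of_forall_iteratedDeriv_eq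
      (hΛ.analyticOnNhd j) (congrFun h)
  refine ⟨k, fun s δ hδ lam hlam hfac i j hij => ?_⟩
  obtain ⟨e, he⟩ := hΛ.exists_equiv_iteratedDeriv_eq_fract hP ⟨hlam, hfac⟩ isOpen_Ioo
    isPreconnected_Ioo (show s ∈ Ioo (s - δ) (s + δ) from ⟨by linarith, by linarith⟩)
  have := (hk _ ⟨Int.fract_nonneg s, (Int.fract_lt_one s).le⟩).ne (e.injective.ne hij)
  simp only [he]
  exact this

/-- Let `P(t,z) = zⁿ + ∑ p_j(t) z^j`, `n ≥ 2`, have coefficients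
real-analytic and 1-periodic on `ℝ`, and assume `P` is simple (no monic `Q ∈ K[z]` of
degree `≥ 1` with `Q² ∣ P` in `K[z]`) and locally completely reducible.  Then there is a
`k ≥ 0` such that for every `s ∈ ℝ` and every local analytic factorization
`P(t,z) = ∏ (z - λ_j(t))` on `(s-δ, s+δ)`, the `k`-jets
`(λ_j(s), λ_j'(s), …, λ_j^{(k)}(s))`, `j = 1, …, n`, are pairwise distinct. -/
theorem stmt_15 (n : ℕ) (hn : 2 ≤ n) (p : Fin n → ℝ → ℂ)
    (hp_an : ∀ j, ∀ t : ℝ, AnalyticAt ℝ (p j) t)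
    (hp_per : ∀ j, ∀ t : ℝ, p j (t + 1) = p j t)
    (hsimple : ¬ ∃ d : ℕ, 1 ≤ d ∧ ∃ qc : Fin d → ℝ → ℂ, ∃ r : Fin (n + 1) → ℝ → ℂ,
      (∀ j, ∀ t : ℝ, AnalyticAt ℝ (qc j) t) ∧ (∀ j, ∀ t : ℝ, qc j (t + 1) = qc j t) ∧
      (∀ j, ∀ t : ℝ, AnalyticAt ℝ (r j) t) ∧ (∀ j, ∀ t : ℝ, r j (t + 1) = r j t) ∧
      ∀ (t : ℝ) (z : ℂ),
        z ^ n + ∑ j, p j t * z ^ (j : ℕ) =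
          (z ^ d + ∑ j, qc j t * z ^ (j : ℕ)) ^ 2 * (∑ j, r j t * z ^ (j : ℕ)))
    (hLCR : ∀ s : ℝ, ∃ δ : ℝ, 0 < δ ∧ ∃ lam : Fin n → ℝ → ℂ,
      (∀ i, AnalyticOnNhd ℝ (lam i) (Set.Ioo (s - δ) (s + δ))) ∧
      ∀ t ∈ Set.Ioo (s - δ) (s + δ), ∀ z : ℂ,
        z ^ n + ∑ j, p j t * z ^ (j : ℕ) = ∏ i, (z - lam i t)) :
    ∃ k : ℕ, ∀ s : ℝ, ∀ δ : ℝ, 0 < δ → ∀ lam : Fin n → ℝ → ℂ,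
      (∀ i, AnalyticOnNhd ℝ (lam i) (Set.Ioo (s - δ) (s + δ))) →
      (∀ t ∈ Set.Ioo (s - δ) (s + δ), ∀ z : ℂ,
        z ^ n + ∑ j, p j t * z ^ (j : ℕ) = ∏ i, (z - lam i t)) →
      ∀ i j : Fin n, i ≠ j →
        (fun l : Fin (k + 1) => iteratedDeriv (l : ℕ) (lam i) s)
          ≠ (fun l : Fin (k + 1) => iteratedDeriv (l : ℕ) (lam j) s) :=
  stmt_15_general n p hp_per hsimple hLCR
end
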